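/- arXiv:2304.04571 — 5 statements merged into one kernel-verified Lean document; each statement's English description precedes it below -/
import Mathlib

section
/- Lemma (Lemma 4.1, disjointness of deformed ABHY realizations for distinct cosets): Let n ≥ 4 and fix the fan reference triangulation T = {(0, j) : 2 ≤ j ≤ n−2}. For any two permutations σ₁, σ₂ of Fin n lying in distinct cosets of the dihedral subgroup D (i.e. σ₂⁻¹σ₁ ∉ D), there exist σ ∈ σ₁·D and σ' ∈ σ₂·D such that for every choice of families of positive constants c and c', the deformed ABHY associahedra A^{T,σ}(c) and A^{T,σ'}(c') are disjoint subsets of the space of massless kinematic configurations. -/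
/-- An `n`-point massless kinematic configuration: symmetric, vanishing diagonal,
and momentum conservation `∑ j, w i j = 0`. -/
def IsKinematic {n : ℕ} (w : Fin n → Fin n → ℝ) : Prop :=
  (∀ i j, w i j = w j i) ∧ (∀ i, w i i = 0) ∧ (∀ i, ∑ j, w i j = 0)

/-- The Mandelstam invariant `s_w(I) = ∑_{{i,j} ⊆ I, i ≠ j} w i j`
(sum over unordered pairs of distinct elements of `I`). -/
noncomputable def mandelstam {n : ℕ} (w : Fin n → Fin n → ℝ) (I : Finset (Fin n)) : ℝ :=
  ∑ i ∈ I, ∑ j ∈ I, if i < j then w i j else 0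

/-- A diagonal of the `n`-gon: a pair `(i, j)` with `i + 2 ≤ j` and `(i,j) ≠ (0, n-1)`. -/
def IsDiagonal {n : ℕ} (d : Fin n × Fin n) : Prop :=
  d.1.val + 2 ≤ d.2.val ∧ ¬(d.1.val = 0 ∧ d.2.val = n - 1)

/-- The arc of a diagonal `(i, j)`: the subset `{i, i+1, …, j-1}` of `Fin n`. -/
def arcOf {n : ℕ} (d : Fin n × Fin n) : Finset (Fin n) :=
  Finset.univ.filter (fun k => d.1.val ≤ k.val ∧ k.val < d.2.val)

/-- The rotated fan triangulation `T^c = {(i, n-1) : 1 ≤ i ≤ n-3}`. -/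
def fanTc (n : ℕ) : Set (Fin n × Fin n) :=
  { d | d.2.val = n - 1 ∧ 1 ≤ d.1.val ∧ d.1.val ≤ n - 3 }

/-- The deformed ABHY associahedron `A^{T,σ}(c)` (for the fan reference triangulation
`T = {(0,j) : 2 ≤ j ≤ n-2}`): the set of massless kinematic configurations with
`s_w(σ(arc(i,j))) ≥ 0` for every diagonal `(i,j)` and `w(σ i)(σ j) = -c_{ij}` for every
diagonal `(i,j) ∉ T^c`. -/
def deformedAssociahedron {n : ℕ} (σ : Equiv.Perm (Fin n)) (c : Fin n × Fin n → ℝ) :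
    Set (Fin n → Fin n → ℝ) :=
  { w | IsKinematic w ∧
      (∀ d : Fin n × Fin n, IsDiagonal d → 0 ≤ mandelstam w ((arcOf d).image σ)) ∧
      (∀ d : Fin n × Fin n, IsDiagonal d → d ∉ fanTc n → w (σ d.1) (σ d.2) = - c d) }

/-- The dihedral subgroup of `Perm (Fin n)`, generated by the rotation `i ↦ i + 1`
(mod `n`) and the reflection `i ↦ -i` (mod `n`). -/
def dihedral (n : ℕ) [NeZero n] : Subgroup (Equiv.Perm (Fin n)) :=
  Subgroup.closure {Equiv.addRight (1 : Fin n), Equiv.neg (Fin n)}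


/-!
Take `σ = σ₁` and rotate `σ₂` to `σ'` so that `σ'` and `σ₁` agree at the apex `n - 1` of the fan.
A point `w` of `A^{T,σ₁}(c)` has `w (σ₁ i) (σ₁ (i+1)) = s_w(σ₁{i, i+1}) ≥ 0` along the path
`0, 1, …, n-2`, while a point of `A^{T,σ'}(c')` has `w (σ' p) (σ' q) = -c'_{pq} < 0` for all
non-adjacent `p, q` on that path. So if `w` lies in both, `σ'⁻¹σ₁`, which fixes `n - 1`, maps the
path `0, …, n-2` onto itself preserving adjacency: it is the identity or the reversal
`i ↦ n - 2 - i`, i.e. `1` or `i ↦ -2 - i`, both dihedral, and then `σ₂⁻¹σ₁` would be dihedral.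
-/

open Function

theorem Fin.eq_id_or_eq_rev_of_adjacent {k : ℕ} {f : Fin (k + 1) → Fin (k + 1)}
    (hf : Injective f)
    (hadj : ∀ i : Fin k, (f i.succ : ℕ) = f i.castSucc + 1 ∨ (f i.castSucc : ℕ) = f i.succ + 1) :
    f = id ∨ f = Fin.rev := by
  rcases k with _ | k
  · exact Or.inl (funext fun _ => Subsingleton.elim (α := Fin 1) _ _)
  obtain ⟨ε, hε, hf₁⟩ : ∃ ε : ℤ, (ε = 1 ∨ ε = -1) ∧ (f 1 : ℤ) = f 0 + ε := by
    rcases hadj 0 with h | h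
    · exact ⟨1, by simp, by simp at h; omega⟩
    · exact ⟨-1, by simp, by simp at h; omega⟩
  -- the steps along the path all have the same sign, since `f (j + 2) ≠ f j`
  have hprog : ∀ j (hj : j < k + 2), (f ⟨j, hj⟩ : ℤ) = f 0 + ε * j := by
    intro j
    induction j using Nat.twoStepInduction with
    | zero => intro _; simp
    | one => intro _; simpa using hf₁
    | more j ih₀ ih₁ =>
      intro hj
      have h₀ := ih₀ (by omega)
      have h₁ := ih₁ (by omega)
      have hne : (f ⟨j + 2, hj⟩ : ℕ) ≠ f ⟨j, by omega⟩ :=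
        Fin.val_injective.ne (hf.ne (by simp [Fin.ext_iff]))
      have hstep : (f ⟨j + 2, hj⟩ : ℕ) = f ⟨j + 1, by omega⟩ + 1 ∨
          (f ⟨j + 1, by omega⟩ : ℕ) = f ⟨j + 2, hj⟩ + 1 :=
        hadj ⟨j + 1, by omega⟩
      push_cast at h₀ h₁ ⊢
      rcases hε with rfl | rfl <;> omega
  have hprog' (i : Fin (k + 2)) : (f i : ℤ) = f 0 + ε * i := hprog i i.isLt
  have hlast := hprog' (Fin.last _)
  have hbound := (f (Fin.last _)).isLt
  simp only [Fin.val_last] at hlast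
  push_cast at hlast
  rcases hε with rfl | rfl
  · left
    funext i
    have := hprog' i
    ext
    simp only [id]
    omega
  · right
    funext i
    have := hprog' i
    ext
    simp only [Fin.val_rev]
    omega

section Dihedral

variable {n : ℕ} [NeZero n]

open Fin.NatCast Fin.CommRing in
theorem addRight_mem_dihedral (t : Fin n) : Equiv.addRight t ∈ dihedral n := by
  have h : Equiv.addRight t = Equiv.addRight (1 : Fin n) ^ t.val := by
    rw [Equiv.nsmul_addRight, nsmul_one, Fin.cast_val_eq_self]
  exact h ▸ pow_mem (Subgroup.subset_closure (by simp)) _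

theorem neg_mem_dihedral : Equiv.neg (Fin n) ∈ dihedral n :=
  Subgroup.subset_closure (by simp)

end Dihedral

theorem neg_mul_addRight_two_apply_last (k : ℕ) :
    (Equiv.neg (Fin (k + 2)) * Equiv.addRight 2 : Equiv.Perm _) (Fin.last _) = Fin.last _ := by
  rw [Equiv.Perm.mul_apply, Equiv.neg_apply, Equiv.coe_addRight, neg_eq_iff_add_eq_zero,
    Fin.ext_iff]
  simp [Fin.val_add, show k + 1 + 2 + (k + 1) = (k + 2) * 2 by ring]

theorem neg_mul_addRight_two_apply_castSucc {k : ℕ} (i : Fin (k + 1)) :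
    (Equiv.neg (Fin (k + 2)) * Equiv.addRight 2 : Equiv.Perm _) i.castSucc = i.rev.castSucc := by
  rw [Equiv.Perm.mul_apply, Equiv.neg_apply, Equiv.coe_addRight, neg_eq_iff_add_eq_zero,
    Fin.ext_iff]
  simp [Fin.val_add, show (i : ℕ) + 2 + (k - i) = k + 2 by omega]

theorem mandelstam_pair {n : ℕ} {w : Fin n → Fin n → ℝ} (hw : ∀ i j, w i j = w j i) {a b : Fin n}
    (hab : a ≠ b) : mandelstam w {a, b} = w a b := by
  rcases hab.lt_or_gt with h | h <;>
    simp [mandelstam, Finset.sum_pair hab, h, h.not_gt, hw b a]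

theorem arcOf_eq_pair {n : ℕ} {a b c : Fin n} (hab : b.val = a.val + 1) (hbc : c.val = b.val + 1) :
    arcOf (a, c) = {a, b} := by
  ext x
  simp only [arcOf, Finset.mem_filter, Finset.mem_univ, true_and, Finset.mem_insert,
    Finset.mem_singleton, Fin.ext_iff]
  omega

namespace deformedAssociahedron

variable {n : ℕ} {σ : Equiv.Perm (Fin n)} {c : Fin n × Fin n → ℝ} {w : Fin n → Fin n → ℝ}

theorem nonneg_of_val_eq_succ (hn : 4 ≤ n) (hw : w ∈ deformedAssociahedron σ c) {a b : Fin n}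
    (hab : b.val = a.val + 1) (hb : b.val + 1 < n) : 0 ≤ w (σ a) (σ b) := by
  have hd : IsDiagonal (a, ⟨b.val + 1, hb⟩) := by
    simp only [IsDiagonal]
    omega
  have := hw.2.1 _ hd
  rwa [arcOf_eq_pair hab rfl, Finset.image_insert, Finset.image_singleton,
    mandelstam_pair hw.1.1 (σ.injective.ne (by simp [Fin.ext_iff, hab]))] at this

theorem neg_of_add_two_le (hc : ∀ d, IsDiagonal d → d ∉ fanTc n → 0 < c d)
    (hw : w ∈ deformedAssociahedron σ c) {a b : Fin n} (hab : a.val + 2 ≤ b.val)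
    (hb : b.val + 2 ≤ n) : w (σ a) (σ b) < 0 := by
  have hd : IsDiagonal (a, b) := by
    simp only [IsDiagonal]
    omega
  have hT : (a, b) ∉ fanTc n := by
    simp only [fanTc, Set.mem_ofPred_eq]
    omega
  have := hc _ hd hT
  rw [hw.2.2 _ hd hT]
  linarith

theorem val_adjacent_of_nonneg (hc : ∀ d, IsDiagonal d → d ∉ fanTc n → 0 < c d)
    (hw : w ∈ deformedAssociahedron σ c) {a b : Fin n} (hab : a ≠ b) (ha : a.val + 2 ≤ n)
    (hb : b.val + 2 ≤ n) (h : 0 ≤ w (σ a) (σ b)) : b.val = a.val + 1 ∨ a.val = b.val + 1 := by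
  by_contra hfar
  have hab' : a.val ≠ b.val := Fin.val_injective.ne hab
  rcases Nat.lt_or_gt_of_ne hab' with hlt | hlt
  · exact (neg_of_add_two_le hc hw (by omega) hb).not_ge h
  · exact (neg_of_add_two_le hc hw (by omega) ha).not_ge (hw.1.1 _ _ ▸ h)

end deformedAssociahedron

open deformedAssociahedron in
theorem inv_mul_mem_dihedral_of_mem_of_mem {k : ℕ} (hn : 4 ≤ k + 2)
    {τ τ' : Equiv.Perm (Fin (k + 2))}
    {c c' : Fin (k + 2) × Fin (k + 2) → ℝ} {w : Fin (k + 2) → Fin (k + 2) → ℝ}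
    (hc' : ∀ d, IsDiagonal d → d ∉ fanTc (k + 2) → 0 < c' d)
    (hw : w ∈ deformedAssociahedron τ c) (hw' : w ∈ deformedAssociahedron τ' c')
    (hlast : τ (Fin.last _) = τ' (Fin.last _)) : τ'⁻¹ * τ ∈ dihedral (k + 2) := by
  set F := τ'⁻¹ * τ
  have hF_last : F (Fin.last _) = Fin.last _ := by simp [F, hlast]
  have hF_ne (i : Fin (k + 1)) : F i.castSucc ≠ Fin.last _ :=
    fun h => Fin.castSucc_ne_last i (F.injective (h.trans hF_last.symm))
  set f : Fin (k + 1) → Fin (k + 1) := fun i => (F i.castSucc).castPred (hF_ne i)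
  have hFf (i : Fin (k + 1)) : F i.castSucc = (f i).castSucc := (Fin.castSucc_castPred _ _).symm
  have hτ (i : Fin (k + 1)) : τ i.castSucc = τ' (f i).castSucc := by simp [← hFf, F]
  have hf : Injective f := fun i j hij =>
    Fin.castSucc_injective _ (F.injective (by rw [hFf, hFf, hij]))
  have hadj (i : Fin k) :
      (f i.succ : ℕ) = f i.castSucc + 1 ∨ (f i.castSucc : ℕ) = f i.succ + 1 := by
    have h := nonneg_of_val_eq_succ hn hw (a := i.castSucc.castSucc) (b := i.succ.castSucc)
      (by simp) (by simp)
    rw [hτ, hτ] at h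
    simpa using val_adjacent_of_nonneg hc' hw' (Fin.castSucc_injective _ |>.ne
      (hf.ne Fin.castSucc_lt_succ.ne)) (by simp; omega) (by simp; omega) h
  have hF_eq (g : Equiv.Perm (Fin (k + 2))) (hg_last : g (Fin.last _) = Fin.last _)
      (hg : ∀ i, g i.castSucc = (f i).castSucc) : F = g :=
    Equiv.ext fun x => Fin.lastCases (by rw [hF_last, hg_last]) (fun i => by rw [hFf, hg]) x
  rcases Fin.eq_id_or_eq_rev_of_adjacent hf hadj with hid | hrev
  · rw [hF_eq 1 rfl (fun i => by simp [hid])]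
    exact one_mem _
  · rw [hF_eq _ (neg_mul_addRight_two_apply_last k)
      (fun i => by rw [neg_mul_addRight_two_apply_castSucc, hrev])]
    exact mul_mem neg_mem_dihedral (addRight_mem_dihedral 2)

/-- Lemma 4.1: for permutations `σ₁, σ₂` in distinct cosets of the dihedral subgroup,
there are representatives `σ ∈ σ₁·D` and `σ' ∈ σ₂·D` such that the corresponding deformed
ABHY associahedra are disjoint, for every choice of positive constants. -/
theorem deformed_associahedra_disjoint (n : ℕ) [NeZero n] (hn : 4 ≤ n)
    (σ₁ σ₂ : Equiv.Perm (Fin n)) (h : σ₂⁻¹ * σ₁ ∉ dihedral n) :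
    ∃ σ σ' : Equiv.Perm (Fin n), σ₁⁻¹ * σ ∈ dihedral n ∧ σ₂⁻¹ * σ' ∈ dihedral n ∧
      ∀ c c' : Fin n × Fin n → ℝ,
        (∀ d : Fin n × Fin n, IsDiagonal d → d ∉ fanTc n → 0 < c d) →
        (∀ d : Fin n × Fin n, IsDiagonal d → d ∉ fanTc n → 0 < c' d) →
        deformedAssociahedron σ c ∩ deformedAssociahedron σ' c' = ∅ := by
  obtain ⟨k, rfl⟩ : ∃ k, n = k + 2 := ⟨n - 2, by omega⟩
  set t := σ₂⁻¹ (σ₁ (Fin.last _)) - Fin.last _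
  have hσ' : (σ₂ * Equiv.addRight t) (Fin.last _) = σ₁ (Fin.last _) := by simp [t]
  refine ⟨σ₁, σ₂ * Equiv.addRight t, by simp [one_mem],
    by simpa [← mul_assoc] using addRight_mem_dihedral t, fun c c' _ hc' => ?_⟩
  refine Set.eq_empty_of_forall_notMem fun w ⟨hw, hw'⟩ => h ?_
  have hsplit : σ₂⁻¹ * σ₁ = Equiv.addRight t * ((σ₂ * Equiv.addRight t)⁻¹ * σ₁) := by group
  exact hsplit ▸
    mul_mem (addRight_mem_dihedral t) (inv_mul_mem_dihedral_of_mem_of_mem hn hc' hw hw' hσ'.symm)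
end

section
/- There are exactly (n−1)!/2 distinct deformed realizations: for n ≥ 4, the number of distinct families F(σ) = { σ(I) : I a cyclic interval of ZMod n with 2 ≤ |I| ≤ n−2 }, as σ ranges over all permutations of ZMod n, equals (n−1)!/2. Equivalently, F(σ₁) = F(σ₂) if and only if σ₂⁻¹σ₁ lies in the dihedral subgroup D, and the number of cosets of D in Perm(ZMod n) is (n−1)!/2. -/
/-- A cyclic interval of `ZMod n`: a set of the form `{a, a+1, …, a+k-1}` with `1 ≤ k ≤ n`. -/
def IsCyclicInterval {n : ℕ} (I : Finset (ZMod n)) : Prop :=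
  ∃ a : ZMod n, ∃ k : ℕ, 1 ≤ k ∧ k ≤ n ∧
    I = (Finset.range k).image (fun m : ℕ => a + (m : ZMod n))

/-- The family of σ-planar pole index sets:
`F(σ) = { σ(I) : I a cyclic interval with 2 ≤ |I| ≤ n - 2 }`. -/
def poleFamily {n : ℕ} (σ : Equiv.Perm (ZMod n)) : Set (Finset (ZMod n)) :=
  { S | ∃ I : Finset (ZMod n),
      IsCyclicInterval I ∧ 2 ≤ I.card ∧ I.card ≤ n - 2 ∧ S = I.image σ }

/-- The dihedral subgroup of `Perm (ZMod n)`, generated by the rotation `x ↦ x + 1`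
and the reflection `x ↦ -x`. -/
def dihedralZ (n : ℕ) : Subgroup (Equiv.Perm (ZMod n)) :=
  Subgroup.closure {Equiv.addRight (1 : ZMod n), Equiv.neg (ZMod n)}


/-!
`F(σ) = σ • F(1)` for the pointwise action of `Perm (ZMod n)` on sets of finsets, so the
distinct families form the orbit of `F(1)` and are counted by the index of its stabilizer.
A permutation fixing `F(1)` sends each adjacent pair `{a, a + 1}` (an interval of size
`2 ≤ n - 2`) to an adjacent pair, so its steps `τ (a + 1) - τ a` are `±1`; two consecutive
steps cannot cancel because `2 ≠ 0` in `ZMod n`, so `τ x = τ 0 ± x` and the stabilizer is the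
image of `DihedralGroup n`, of order `2n`. Hence the index is `n! / 2n = (n - 1)! / 2`.
-/

open Equiv MulAction Pointwise DihedralGroup

variable {n : ℕ}

lemma ZMod.two_ne_zero_of_three_le (hn : 3 ≤ n) : (2 : ZMod n) ≠ 0 := fun h => by
  have h2 : ((2 : ℕ) : ZMod n) = 0 := by exact_mod_cast h
  have := Nat.le_of_dvd two_pos ((ZMod.natCast_eq_zero_iff 2 n).mp h2)
  omega

lemma ZMod.eq_add_mul_of_forall_add_one [NeZero n] {f : ZMod n → ZMod n} {c : ZMod n}
    (h : ∀ x, f (x + 1) = f x + c) (x : ZMod n) : f x = f 0 + x * c := by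
  rw [← ZMod.natCast_zmod_val x]
  induction x.val with
  | zero => simp
  | succ m ih => rw [Nat.cast_succ, h, ih]; ring

namespace DihedralGroup

lemma closure_r_one_sr_zero : Subgroup.closure {r (1 : ZMod n), sr 0} = ⊤ := by
  have hr : ∀ i : ZMod n, r i ∈ Subgroup.closure {r (1 : ZMod n), sr 0} := by
    intro i
    obtain ⟨k, rfl⟩ := ZMod.intCast_surjective i
    rw [← r_one_zpow]
    exact zpow_mem (Subgroup.subset_closure (by simp)) k
  refine eq_top_iff.mpr fun g _ => ?_
  rcases g with i | i
  · exact hr i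
  · simpa [sr_mul_r] using mul_mem (Subgroup.subset_closure (by simp) : sr 0 ∈ _) (hr i)

def toPerm (n : ℕ) : DihedralGroup n →* Perm (ZMod n) where
  toFun
    | r i => Equiv.addRight i
    | sr i => (Equiv.addRight i).trans (Equiv.neg _)
  map_one' := Equiv.addRight_zero
  map_mul' := by
    rintro (i | i) (j | j) <;> ext x <;>
      simp only [r_mul_r, r_mul_sr, sr_mul_r, sr_mul_sr, Perm.mul_apply, trans_apply,
        coe_addRight, Equiv.neg_apply] <;> ring

@[simp] lemma toPerm_r_apply (i x : ZMod n) : toPerm n (r i) x = x + i := rfl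

@[simp] lemma toPerm_sr_apply (i x : ZMod n) : toPerm n (sr i) x = -(x + i) := rfl

lemma range_toPerm : (toPerm n).range = dihedralZ n := by
  have hgen : toPerm n '' {r 1, sr 0} = {Equiv.addRight 1, Equiv.neg (ZMod n)} := by
    have hneg : toPerm n (sr 0) = Equiv.neg (ZMod n) := by ext; simp
    rw [Set.image_pair, hneg]
    rfl
  rw [MonoidHom.range_eq_map, ← closure_r_one_sr_zero, MonoidHom.map_closure, hgen, dihedralZ]

lemma toPerm_injective (h2 : (2 : ZMod n) ≠ 0) : Function.Injective (toPerm n) := by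
  refine (injective_iff_map_eq_one _).mpr ?_
  rintro (i | i) h
  · rw [show i = 0 by simpa using congr($h 0), r_zero]
  · have h0 := congr($h 0)
    have h1 := congr($h 1)
    simp only [toPerm_sr_apply, Perm.one_apply] at h0 h1
    exact absurd (by linear_combination h0 - h1) h2

end DihedralGroup

lemma nat_card_dihedralZ (h2 : (2 : ZMod n) ≠ 0) : Nat.card (dihedralZ n) = 2 * n := by
  rw [← range_toPerm, ← Nat.card_congr (MonoidHom.ofInjective (toPerm_injective h2)).toEquiv,
    DihedralGroup.nat_card]

lemma index_dihedralZ (hn : 3 ≤ n) : (dihedralZ n).index = (n - 1).factorial / 2 := by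
  have : NeZero n := ⟨by omega⟩
  have hcard := (dihedralZ n).card_mul_index
  rw [nat_card_dihedralZ (ZMod.two_ne_zero_of_three_le hn), Nat.card_perm, Nat.card_zmod,
    ← Nat.mul_factorial_pred (n := n) (by omega)] at hcard
  have := Nat.eq_of_mul_eq_mul_left (by omega : 0 < n)
    (by linarith : n * (2 * (dihedralZ n).index) = n * (n - 1).factorial)
  omega

lemma card_image_range_add {a : ZMod n} {k : ℕ} (hk : k ≤ n) :
    ((Finset.range k).image (fun m : ℕ => a + (m : ZMod n))).card = k := by
  rw [Finset.card_image_of_injOn, Finset.card_range]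
  intro m₁ h₁ m₂ h₂ h
  simp only [Finset.coe_range, Set.mem_Iio] at h₁ h₂
  have := congrArg ZMod.val (add_left_cancel h)
  rwa [ZMod.val_cast_of_lt (by omega), ZMod.val_cast_of_lt (by omega)] at this

lemma image_range_two_add (a : ZMod n) :
    (Finset.range 2).image (fun m : ℕ => a + (m : ZMod n)) = {a, a + 1} := by
  simp [Finset.range_add_one, Finset.image_insert, Finset.pair_comm]

lemma isCyclicInterval_pair (hn : 2 ≤ n) (a : ZMod n) : IsCyclicInterval {a, a + 1} :=
  ⟨a, 2, one_le_two, hn, (image_range_two_add a).symm⟩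

lemma IsCyclicInterval.exists_eq_pair {I : Finset (ZMod n)} (hI : IsCyclicInterval I)
    (hcard : I.card = 2) : ∃ b, I = {b, b + 1} := by
  obtain ⟨b, k, -, hkn, rfl⟩ := hI
  rw [card_image_range_add hkn] at hcard
  exact ⟨b, hcard ▸ image_range_two_add b⟩

lemma IsCyclicInterval.image_toPerm {I : Finset (ZMod n)} (hI : IsCyclicInterval I)
    (g : DihedralGroup n) : IsCyclicInterval (I.image (toPerm n g)) := by
  obtain ⟨a, k, hk1, hkn, rfl⟩ := hI
  rw [Finset.image_image]
  rcases g with i | i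
  · refine ⟨a + i, k, hk1, hkn, ?_⟩
    congr 1
    ext m
    simp only [Function.comp_apply, toPerm_r_apply]
    ring
  · -- the image of `[a, a + k)` under `x ↦ -(x + i)` is `[-(a + i) - (k - 1), -(a + i)]`
    refine ⟨-(a + i) - ((k - 1 : ℕ) : ZMod n), k, hk1, hkn, ?_⟩
    ext x
    simp only [Finset.mem_image, Finset.mem_range, Function.comp_apply, toPerm_sr_apply]
    constructor <;> rintro ⟨m, hm, rfl⟩ <;> refine ⟨k - 1 - m, by omega, ?_⟩ <;>
      rw [Nat.cast_sub (show m ≤ k - 1 by omega)] <;> ring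

lemma mem_poleFamily_one {S : Finset (ZMod n)} :
    S ∈ poleFamily (1 : Perm (ZMod n)) ↔
      IsCyclicInterval S ∧ 2 ≤ S.card ∧ S.card ≤ n - 2 := by
  simp [poleFamily]

lemma poleFamily_eq_smul (σ : Perm (ZMod n)) : poleFamily σ = σ • poleFamily 1 := by
  ext S
  simp [poleFamily, Set.mem_smul_set, Finset.smul_finset_def, eq_comm, and_assoc]

lemma poleFamily_toPerm_subset (g : DihedralGroup n) :
    poleFamily (toPerm n g) ⊆ poleFamily 1 := by
  rintro _ ⟨I, hI, h2, hle, rfl⟩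
  rw [mem_poleFamily_one, Finset.card_image_of_injective _ (toPerm n g).injective]
  exact ⟨hI.image_toPerm g, h2, hle⟩

lemma poleFamily_toPerm (g : DihedralGroup n) : poleFamily (toPerm n g) = poleFamily 1 := by
  refine (poleFamily_toPerm_subset g).antisymm ?_
  calc poleFamily 1 = toPerm n g • toPerm n g⁻¹ • poleFamily 1 := by
        rw [smul_smul, ← map_mul, mul_inv_cancel, map_one, one_smul]
    _ ⊆ toPerm n g • poleFamily 1 := by
        rw [← poleFamily_eq_smul]
        exact Set.smul_set_mono (poleFamily_toPerm_subset _)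
    _ = poleFamily (toPerm n g) := (poleFamily_eq_smul _).symm

lemma dihedralZ_le_stabilizer_poleFamily_one :
    dihedralZ n ≤ stabilizer (Perm (ZMod n)) (poleFamily (1 : Perm (ZMod n))) := by
  rw [← range_toPerm]
  rintro _ ⟨g, rfl⟩
  rw [mem_stabilizer_iff, ← poleFamily_eq_smul, poleFamily_toPerm]

lemma sub_eq_or_eq_neg_of_pair_eq {G : Type*} [AddCommGroup G] [DecidableEq G] {x y b c : G}
    (hxy : x ≠ y) (h : ({x, y} : Finset G) = {b, b + c}) : y - x = c ∨ y - x = -c := by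
  have hx : x ∈ ({b, b + c} : Finset G) := by rw [← h]; simp
  have hy : y ∈ ({b, b + c} : Finset G) := by rw [← h]; simp
  clear h
  simp only [Finset.mem_insert, Finset.mem_singleton] at hx hy
  rcases hx with rfl | rfl <;> rcases hy with rfl | rfl <;> simp_all

lemma sub_eq_one_or_neg_one_of_poleFamily_eq (hn : 4 ≤ n) {τ : Perm (ZMod n)}
    (h : poleFamily τ = poleFamily 1) (a : ZMod n) :
    τ (a + 1) - τ a = 1 ∨ τ (a + 1) - τ a = -1 := by
  have : Fact (1 < n) := ⟨by omega⟩
  have hne : τ a ≠ τ (a + 1) := τ.injective.ne (by simp)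
  have hpair : ({a, a + 1} : Finset (ZMod n)).card = 2 := Finset.card_pair (by simp)
  have hmem : ({τ a, τ (a + 1)} : Finset (ZMod n)) ∈ poleFamily 1 := by
    rw [← h]
    exact ⟨{a, a + 1}, isCyclicInterval_pair (by omega) a, hpair.ge, by omega,
      by simp [Finset.image_insert]⟩
  obtain ⟨b, hb⟩ := (mem_poleFamily_one.mp hmem).1.exists_eq_pair (Finset.card_pair hne)
  exact sub_eq_or_eq_neg_of_pair_eq hne hb

lemma mem_dihedralZ_of_poleFamily_eq (hn : 4 ≤ n) {τ : Perm (ZMod n)}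
    (h : poleFamily τ = poleFamily 1) : τ ∈ dihedralZ n := by
  have : NeZero n := ⟨by omega⟩
  have h2 := ZMod.two_ne_zero_of_three_le (by omega : 3 ≤ n)
  set d : ZMod n → ZMod n := fun a => τ (a + 1) - τ a
  have hd := sub_eq_one_or_neg_one_of_poleFamily_eq hn h
  -- opposite consecutive steps would give `τ (a + 2) = τ a`, impossible as `2 ≠ 0`
  have hd_const : ∀ a, d (a + 1) = d a + 0 := by
    intro a
    have hcancel : d a + d (a + 1) ≠ 0 := fun h0 =>
      h2 (by linear_combination τ.injective (by linear_combination h0 : τ (a + 1 + 1) = τ a))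
    rcases hd a with ha | ha <;> rcases hd (a + 1) with ha' | ha' <;>
      simp [d, ha, ha'] at hcancel ⊢
  have hτ : ∀ x, τ (x + 1) = τ x + d 0 := fun x => by
    linear_combination ZMod.eq_add_mul_of_forall_add_one hd_const x
  have hlin := ZMod.eq_add_mul_of_forall_add_one hτ
  rw [← range_toPerm]
  obtain h1 | h1 : d 0 = 1 ∨ d 0 = -1 := hd 0
  · exact ⟨r (τ 0), Equiv.ext fun x => by rw [toPerm_r_apply, hlin x, h1]; ring⟩
  · exact ⟨sr (-τ 0), Equiv.ext fun x => by rw [toPerm_sr_apply, hlin x, h1]; ring⟩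

lemma stabilizer_poleFamily_one (hn : 4 ≤ n) :
    stabilizer (Perm (ZMod n)) (poleFamily (1 : Perm (ZMod n))) = dihedralZ n := by
  refine le_antisymm (fun τ hτ => mem_dihedralZ_of_poleFamily_eq hn ?_)
    dihedralZ_le_stabilizer_poleFamily_one
  rwa [poleFamily_eq_smul]

/-- There are exactly `(n-1)!/2` distinct deformed realizations: the number of distinct
families `F(σ)` is `(n-1)!/2`; moreover `F(σ₁) = F(σ₂)` iff `σ₂⁻¹σ₁` lies in the dihedral
subgroup, whose number of cosets in `Perm (ZMod n)` is `(n-1)!/2`. -/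
theorem card_poleFamilies (n : ℕ) (hn : 4 ≤ n) :
    (Set.range (fun σ : Equiv.Perm (ZMod n) => poleFamily σ)).ncard =
      Nat.factorial (n - 1) / 2 ∧
    (∀ σ₁ σ₂ : Equiv.Perm (ZMod n),
      poleFamily σ₁ = poleFamily σ₂ ↔ σ₂⁻¹ * σ₁ ∈ dihedralZ n) ∧
    (dihedralZ n).index = Nat.factorial (n - 1) / 2 := by
  have hstab := stabilizer_poleFamily_one hn
  have hindex := index_dihedralZ (by omega : 3 ≤ n)
  have horbit : Set.range (fun σ : Perm (ZMod n) => poleFamily σ) = orbit _ (poleFamily 1) :=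
    congrArg Set.range (funext poleFamily_eq_smul)
  refine ⟨?_, fun σ₁ σ₂ => ?_, hindex⟩
  · rw [horbit, ← index_stabilizer, hstab, hindex]
  · rw [poleFamily_eq_smul σ₁, poleFamily_eq_smul σ₂, ← hstab, mem_stabilizer_iff, mul_smul,
      inv_smul_eq_iff]
end

section
/- For n ≥ 3, every permutation σ of Fin n and every triangulation T of the n-gon, the family ch(σ, T) = { σ • arc(i,j) : (i,j) ∈ T } is a scattering channel: it consists of exactly n − 3 distinct splits that are pairwise compatible. (The action of any element of the Bose symmetry group S_n on the planar channel of a triangulation yields a valid scattering channel of the φ³ S-matrix.) -/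
/-- Normalization of a subset of `Fin n`: itself if it contains `0`, else its complement. -/
def normSet {n : ℕ} [NeZero n] (J : Finset (Fin n)) : Finset (Fin n) :=
  if (0 : Fin n) ∈ J then J else Jᶜ

/-- A split: a subset containing 0 with `2 ≤ |I| ≤ n - 2`. -/
def IsSplit {n : ℕ} [NeZero n] (I : Finset (Fin n)) : Prop :=
  (0 : Fin n) ∈ I ∧ 2 ≤ I.card ∧ I.card ≤ n - 2

/-- Action of a permutation on a subset, followed by normalization. -/
def actSet {n : ℕ} [NeZero n] (σ : Equiv.Perm (Fin n)) (J : Finset (Fin n)) : Finset (Fin n) :=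
  normSet (J.image σ)

/-- Compatibility of two splits. -/
def Compatible {n : ℕ} (I J : Finset (Fin n)) : Prop :=
  I ⊆ J ∨ J ⊆ I ∨ I ∪ J = Finset.univ

/-- A scattering channel: `n - 3` pairwise compatible splits. -/
def IsChannel {n : ℕ} [NeZero n] (C : Finset (Finset (Fin n))) : Prop :=
  C.card = n - 3 ∧ (∀ I ∈ C, IsSplit I) ∧ ∀ I ∈ C, ∀ J ∈ C, I ≠ J → Compatible I J

/-- Two diagonals cross. -/
def Cross {n : ℕ} (d e : Fin n × Fin n) : Prop :=
  (d.1 < e.1 ∧ e.1 < d.2 ∧ d.2 < e.2) ∨ (e.1 < d.1 ∧ d.1 < e.2 ∧ e.2 < d.2)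

/-- A triangulation: `n - 3` pairwise noncrossing diagonals. -/
def IsTriangulation {n : ℕ} (T : Finset (Fin n × Fin n)) : Prop :=
  T.card = n - 3 ∧ (∀ d ∈ T, IsDiagonal d) ∧ ∀ d ∈ T, ∀ e ∈ T, d ≠ e → ¬ Cross d e

/-- The channel of a pair (permutation, triangulation):
`ch(σ, T) = { σ • arc(i,j) : (i,j) ∈ T }`. -/
def channelOf {n : ℕ} [NeZero n] (σ : Equiv.Perm (Fin n)) (T : Finset (Fin n × Fin n)) :
    Finset (Finset (Fin n)) :=
  T.image (fun d => actSet σ (arcOf d))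

lemma mem_arcOf {n : ℕ} {d : Fin n × Fin n} {k : Fin n} :
    k ∈ arcOf d ↔ d.1.val ≤ k.val ∧ k.val < d.2.val := by
  simp [arcOf]

lemma arcOf_card {n : ℕ} (d : Fin n × Fin n) :
    (arcOf d).card = d.2.val - d.1.val := by
  have h : ∀ m ∈ Finset.Ico d.1.val d.2.val, m < n := by
    intro m hm
    have := d.2.isLt
    simp only [Finset.mem_Ico] at hm
    omega
  have he : arcOf d = (Finset.Ico d.1.val d.2.val).attachFin h := by
    ext k
    simp [mem_arcOf, Finset.mem_attachFin, Finset.mem_Ico]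
  rw [he, Finset.card_attachFin, Nat.card_Ico]

lemma zero_mem_normSet {n : ℕ} [NeZero n] (J : Finset (Fin n)) : (0 : Fin n) ∈ normSet J := by
  unfold normSet; split_ifs with h
  · exact h
  · simpa using h

lemma isSplit_actSet {n : ℕ} [NeZero n] (σ : Equiv.Perm (Fin n)) {J : Finset (Fin n)}
    (h2 : 2 ≤ J.card) (h3 : J.card ≤ n - 2) : IsSplit (actSet σ J) := by
  have hn : 2 ≤ n := by
    have := J.card_le_univ
    simp only [Finset.card_univ, Fintype.card_fin] at this
    omega
  have hc : (J.image σ).card = J.card := Finset.card_image_of_injective _ σ.injective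
  refine ⟨zero_mem_normSet _, ?_⟩
  show 2 ≤ (normSet (J.image σ)).card ∧ (normSet (J.image σ)).card ≤ n - 2
  unfold normSet
  split_ifs with h
  · rw [hc]; omega
  · rw [Finset.card_compl, hc, Fintype.card_fin]; omega

lemma normSet_eq_cases {n : ℕ} [NeZero n] {X Y : Finset (Fin n)} (h : normSet X = normSet Y) :
    X = Y ∨ X = Yᶜ := by
  unfold normSet at h
  split_ifs at h with h1 h2 h2
  · exact Or.inl h
  · exact Or.inr h
  · exact Or.inr (by rw [← h, compl_compl])
  · left; have := congrArg (·ᶜ) h; simpa using this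

lemma compat_normSet {n : ℕ} [NeZero n] {A B : Finset (Fin n)}
    (h : A ⊆ B ∨ B ⊆ A ∨ Disjoint A B) : Compatible (normSet A) (normSet B) := by
  unfold normSet
  split_ifs with hA hB hB
  · rcases h with h | h | h
    · exact Or.inl h
    · exact Or.inr (Or.inl h)
    · exact absurd hB (Finset.disjoint_left.mp h hA)
  · rcases h with h | h | h
    · exact absurd (h hA) hB
    · refine Or.inr (Or.inr ?_)
      rw [Finset.eq_univ_iff_forall]
      intro x
      simp only [Finset.mem_union, Finset.mem_compl]
      by_cases hx : x ∈ B
      · exact Or.inl (h hx)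
      · exact Or.inr hx
    · exact Or.inl (fun x hx => Finset.mem_compl.mpr (Finset.disjoint_left.mp h hx))
  · rcases h with h | h | h
    · refine Or.inr (Or.inr ?_)
      rw [Finset.eq_univ_iff_forall]
      intro x
      simp only [Finset.mem_union, Finset.mem_compl]
      by_cases hx : x ∈ A
      · exact Or.inr (h hx)
      · exact Or.inl hx
    · exact absurd (h hB) hA
    · exact Or.inr (Or.inl fun x hx => Finset.mem_compl.mpr (Finset.disjoint_right.mp h hx))
  · rcases h with h | h | h
    · exact Or.inr (Or.inl fun x hx =>
        Finset.mem_compl.mpr (fun hxA => Finset.mem_compl.mp hx (h hxA)))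
    · exact Or.inl (fun x hx =>
        Finset.mem_compl.mpr (fun hxB => Finset.mem_compl.mp hx (h hxB)))
    · refine Or.inr (Or.inr ?_)
      rw [Finset.eq_univ_iff_forall]
      intro x
      simp only [Finset.mem_union, Finset.mem_compl]
      by_cases hx : x ∈ A
      · exact Or.inr (Finset.disjoint_left.mp h hx)
      · exact Or.inl hx

lemma arc_trichotomy {n : ℕ} {d e : Fin n × Fin n} (hd : IsDiagonal d) (he : IsDiagonal e)
    (hc : ¬ Cross d e) :
    arcOf d ⊆ arcOf e ∨ arcOf e ⊆ arcOf d ∨ Disjoint (arcOf d) (arcOf e) := by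
  simp only [Cross, Fin.lt_def, not_or, not_and] at hc
  obtain ⟨hc1, hc2⟩ := hc
  have hd1 := hd.1
  have he1 := he.1
  by_cases hdisj : d.2.val ≤ e.1.val ∨ e.2.val ≤ d.1.val
  · refine Or.inr (Or.inr ?_)
    rw [Finset.disjoint_left]
    intro x hx hx'
    rw [mem_arcOf] at hx hx'
    omega
  · push_neg at hdisj
    have key : (e.1.val ≤ d.1.val ∧ d.2.val ≤ e.2.val) ∨
        (d.1.val ≤ e.1.val ∧ e.2.val ≤ d.2.val) := by omega
    rcases key with h | h
    · exact Or.inl (fun x hx => mem_arcOf.mpr (by rw [mem_arcOf] at hx; omega))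
    · exact Or.inr (Or.inl fun x hx => mem_arcOf.mpr (by rw [mem_arcOf] at hx; omega))

lemma arcOf_inj {n : ℕ} {d e : Fin n × Fin n} (hd : IsDiagonal d) (he : IsDiagonal e)
    (h : arcOf d = arcOf e) : d = e := by
  have hd1 := hd.1
  have he1 := he.1
  have hd2 := d.2.isLt
  have he2 := e.2.isLt
  have m1 : d.1 ∈ arcOf e := by rw [← h]; exact mem_arcOf.mpr ⟨le_rfl, by omega⟩
  have m2 : e.1 ∈ arcOf d := by rw [h]; exact mem_arcOf.mpr ⟨le_rfl, by omega⟩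
  have m3 : (⟨d.2.val - 1, by omega⟩ : Fin n) ∈ arcOf e := by
    rw [← h]
    exact mem_arcOf.mpr ⟨show d.1.val ≤ d.2.val - 1 by omega,
      show d.2.val - 1 < d.2.val by omega⟩
  have m4 : (⟨e.2.val - 1, by omega⟩ : Fin n) ∈ arcOf d := by
    rw [h]
    exact mem_arcOf.mpr ⟨show e.1.val ≤ e.2.val - 1 by omega,
      show e.2.val - 1 < e.2.val by omega⟩
  rw [mem_arcOf] at m1 m2 m3 m4
  have m3' : e.1.val ≤ d.2.val - 1 ∧ d.2.val - 1 < e.2.val := m3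
  have m4' : d.1.val ≤ e.2.val - 1 ∧ e.2.val - 1 < d.2.val := m4
  have e1 : d.1 = e.1 := Fin.ext (by omega)
  have e2 : d.2 = e.2 := Fin.ext (by omega)
  exact Prod.ext e1 e2

/-- For every permutation `σ` and every triangulation `T` of the `n`-gon, the family
`ch(σ, T) = { σ • arc(i,j) : (i,j) ∈ T }` is a scattering channel: it consists of exactly
`n - 3` distinct pairwise compatible splits. -/
theorem channelOf_isChannel (n : ℕ) [NeZero n] (hn : 3 ≤ n)
    (σ : Equiv.Perm (Fin n)) (T : Finset (Fin n × Fin n)) (hT : IsTriangulation T) :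
    IsChannel (channelOf σ T) := by
  obtain ⟨hcard, hdiag, hcross⟩ := hT
  have hinj : Set.InjOn (fun d => actSet σ (arcOf d)) T := by
    intro d hd e he hde
    simp only at hde
    rcases normSet_eq_cases hde with h | h
    · exact arcOf_inj (hdiag d hd) (hdiag e he) (Finset.image_injective σ.injective h)
    · exfalso
      have hn1 : n - 1 < n := by omega
      set a : Fin n := ⟨n - 1, hn1⟩ with ha
      have hA : σ a ∉ (arcOf d).image σ := by
        intro hmem
        obtain ⟨y, hy, hy2⟩ := Finset.mem_image.mp hmem
        have hya := σ.injective hy2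
        subst hya
        have := (mem_arcOf.mp hy).2
        have h9 : n - 1 < d.2.val := this
        have := d.2.isLt
        omega
      have hB : σ a ∈ ((arcOf e).image σ)ᶜ := by
        rw [Finset.mem_compl]
        intro hmem
        obtain ⟨y, hy, hy2⟩ := Finset.mem_image.mp hmem
        have hya := σ.injective hy2
        subst hya
        have := (mem_arcOf.mp hy).2
        have h9 : n - 1 < e.2.val := this
        have := e.2.isLt
        omega
      rw [← h] at hB
      exact hA hB
  refine ⟨?_, ?_, ?_⟩
  · rw [channelOf, Finset.card_image_of_injOn hinj, hcard]
  · intro I hI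
    obtain ⟨d, hd, rfl⟩ := Finset.mem_image.mp hI
    have h1 := (hdiag d hd).1
    have h2 := (hdiag d hd).2
    have h3 := d.2.isLt
    refine isSplit_actSet σ ?_ ?_ <;> rw [arcOf_card] <;> omega
  · intro I hI J hJ hne
    obtain ⟨d, hd, rfl⟩ := Finset.mem_image.mp hI
    obtain ⟨e, he, rfl⟩ := Finset.mem_image.mp hJ
    have hdne : d ≠ e := fun hh => hne (by rw [hh])
    have htri := arc_trichotomy (hdiag d hd) (hdiag e he) (hcross d hd e he hdne)
    apply compat_normSet
    rcases htri with h | h | h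
    · exact Or.inl (Finset.image_subset_image h)
    · exact Or.inr (Or.inl (Finset.image_subset_image h))
    · exact Or.inr (Or.inr ((Finset.disjoint_image σ.injective).mpr h))
end

section
/- The number of scattering channels equals the double factorial count of trivalent trees: for n ≥ 3, the number of scattering channels of Fin n — sets of n−3 pairwise compatible splits — equals (2n−5)!!, the total number of distinct n-point trivalent Feynman diagrams. -/
set_option linter.unusedSectionVars false
set_option linter.unusedVariables false

namespace ChanAux
open Finset Fin

instance decIsSplit {n : ℕ} [NeZero n] : DecidablePred (IsSplit (n := n)) := fun I => by
  unfold IsSplit; infer_instance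

instance decCompatible {n : ℕ} (I J : Finset (Fin n)) : Decidable (Compatible I J) := by
  unfold Compatible; infer_instance

instance decIsChannel {n : ℕ} [NeZero n] : DecidablePred (IsChannel (n := n)) := fun C => by
  unfold IsChannel; infer_instance

variable {n : ℕ}

/-- `up J`: view a subset of `Fin n` inside `Fin (n+1)` via `castSucc`. -/
def up (J : Finset (Fin n)) : Finset (Fin (n+1)) :=
  J.map ⟨Fin.castSucc, Fin.castSucc_injective n⟩

/-- `down I`: trace of a subset of `Fin (n+1)` on `Fin n`. -/
def down (I : Finset (Fin (n+1))) : Finset (Fin n) :=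
  Finset.univ.filter (fun x => Fin.castSucc x ∈ I)

/-- lift of a subset, with a Boolean telling whether `last` is added. -/
def lset (K : Finset (Fin n)) (b : Bool) : Finset (Fin (n+1)) :=
  if b then insert (Fin.last n) (up K) else up K

@[simp] lemma mem_down {I : Finset (Fin (n+1))} {x : Fin n} :
    x ∈ down I ↔ Fin.castSucc x ∈ I := by simp [down]

@[simp] lemma castSucc_mem_up {J : Finset (Fin n)} {x : Fin n} :
    Fin.castSucc x ∈ up J ↔ x ∈ J := by
  simp only [up, mem_map, Function.Embedding.coeFn_mk]
  constructor
  · rintro ⟨y, hy, h⟩; rwa [← Fin.castSucc_injective n h]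
  · exact fun h => ⟨x, h, rfl⟩

@[simp] lemma last_not_mem_up {J : Finset (Fin n)} : Fin.last n ∉ up J := by
  simp only [up, mem_map, Function.Embedding.coeFn_mk]
  rintro ⟨y, _, h⟩
  exact absurd h (Fin.castSucc_lt_last y).ne

@[simp] lemma down_lset {K : Finset (Fin n)} {b : Bool} : down (lset K b) = K := by
  ext x
  cases b <;> simp [lset, (Fin.castSucc_lt_last x).ne]

@[simp] lemma last_mem_lset {K : Finset (Fin n)} {b : Bool} :
    Fin.last n ∈ lset K b ↔ b = true := by
  cases b <;> simp [lset]

@[simp] lemma castSucc_mem_lset {K : Finset (Fin n)} {b : Bool} {x : Fin n} :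
    Fin.castSucc x ∈ lset K b ↔ x ∈ K := by
  cases b <;> simp [lset, (Fin.castSucc_lt_last x).ne]

lemma lset_down_eq (I : Finset (Fin (n+1))) : lset (down I) (decide (Fin.last n ∈ I)) = I := by
  ext y
  induction y using Fin.lastCases with
  | last => simp
  | cast x => simp

@[simp] lemma card_up (J : Finset (Fin n)) : (up J).card = J.card := Finset.card_map _

lemma card_lset (K : Finset (Fin n)) (b : Bool) :
    (lset K b).card = K.card + (if b then 1 else 0) := by
  cases b
  · simp [lset]
  · simp [lset, Finset.card_insert_of_notMem last_not_mem_up, Nat.add_comm]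

lemma subset_coords {I I' : Finset (Fin (n+1))} :
    I ⊆ I' ↔ down I ⊆ down I' ∧ (Fin.last n ∈ I → Fin.last n ∈ I') := by
  constructor
  · intro h
    exact ⟨fun x hx => by simpa using h (by simpa using hx), fun hl => h hl⟩
  · rintro ⟨h1, h2⟩ y hy
    induction y using Fin.lastCases with
    | last => exact h2 hy
    | cast x => simpa using h1 (by simpa using hy)

lemma eq_coords {I I' : Finset (Fin (n+1))} :
    I = I' ↔ down I = down I' ∧ (Fin.last n ∈ I ↔ Fin.last n ∈ I') := by
  constructor
  · rintro rfl; exact ⟨rfl, Iff.rfl⟩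
  · rintro ⟨h1, h2⟩
    apply Finset.Subset.antisymm <;> rw [subset_coords]
    · exact ⟨h1.le, h2.mp⟩
    · exact ⟨h1.ge, h2.mpr⟩

@[simp] lemma down_union {I I' : Finset (Fin (n+1))} :
    down (I ∪ I') = down I ∪ down I' := by
  ext x; simp

lemma union_univ_coords {I I' : Finset (Fin (n+1))} :
    I ∪ I' = Finset.univ ↔
      down I ∪ down I' = Finset.univ ∧ (Fin.last n ∈ I ∨ Fin.last n ∈ I') := by
  constructor
  · intro h
    constructor
    · ext x; simp only [Finset.mem_univ, iff_true, ← down_union, h, mem_down]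
    · have : Fin.last n ∈ I ∪ I' := h ▸ Finset.mem_univ _
      simpa using this
  · rintro ⟨h1, h2⟩
    ext y
    simp only [Finset.mem_univ, iff_true]
    induction y using Fin.lastCases with
    | last => simpa using h2
    | cast x =>
      have : x ∈ down I ∪ down I' := h1 ▸ Finset.mem_univ _
      simpa using this

section Cherry
variable [NeZero n]

/-- The split of `Fin (n+1)` corresponding to attaching the new leaf `last` next to leaf `x`. -/
def cherry (x : Fin n) : Finset (Fin (n+1)) :=
  if x = 0 then {0, Fin.last n} else Finset.univ \ {Fin.castSucc x, Fin.last n}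

lemma castSucc_zero' : (Fin.castSucc (0 : Fin n)) = (0 : Fin (n+1)) := by simp

lemma last_ne_zero : (Fin.last n) ≠ (0 : Fin (n+1)) := by
  have : (0:ℕ) < n := Nat.pos_of_ne_zero (NeZero.ne n)
  intro h
  have := congrArg Fin.val h
  simp [Fin.last] at this
  omega

lemma castSucc_eq_zero_iff' {y : Fin n} : Fin.castSucc y = (0 : Fin (n+1)) ↔ y = 0 := by
  rw [← castSucc_zero', (Fin.castSucc_injective n).eq_iff]

@[simp] lemma castSucc_mem_cherry {x y : Fin n} :
    Fin.castSucc y ∈ cherry x ↔ (if x = 0 then y = 0 else y ≠ x) := by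
  by_cases hx : x = 0
  · subst hx
    simp only [cherry, if_pos rfl, eq_self_iff_true, if_true, Finset.mem_insert,
      Finset.mem_singleton, castSucc_eq_zero_iff']
    constructor
    · rintro (h | h)
      · exact h
      · exact absurd h (Fin.castSucc_lt_last y).ne
    · exact fun h => Or.inl h
  · simp only [cherry, if_neg hx, Finset.mem_sdiff, Finset.mem_univ, true_and,
      Finset.mem_insert, Finset.mem_singleton]
    constructor
    · intro h hyx
      exact h (Or.inl (by rw [hyx]))
    · rintro h (hc | hc)
      · exact h ((Fin.castSucc_injective n) hc)
      · exact absurd hc (Fin.castSucc_lt_last y).ne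

@[simp] lemma last_mem_cherry {x : Fin n} : Fin.last n ∈ cherry x ↔ x = 0 := by
  by_cases hx : x = 0 <;>
    simp [cherry, hx, (Fin.castSucc_lt_last x).ne']

@[simp] lemma down_cherry (x : Fin n) :
    down (cherry x) = if x = 0 then {0} else Finset.univ.erase x := by
  by_cases hx : x = 0 <;> ext y <;>
    simp [hx, Finset.mem_erase]

end Cherry

section Splits
variable [NeZero n]

@[simp] lemma zero_mem_lset {K : Finset (Fin n)} {b : Bool} :
    (0 : Fin (n+1)) ∈ lset K b ↔ (0 : Fin n) ∈ K := by
  rw [← castSucc_zero', castSucc_mem_lset]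

@[simp] lemma zero_mem_cherry {x : Fin n} : (0 : Fin (n+1)) ∈ cherry x := by
  rw [← castSucc_zero', castSucc_mem_cherry]
  by_cases hx : x = 0
  · simp [hx]
  · simp [hx, Ne.symm hx]

lemma isSplit_lset {K : Finset (Fin n)} (hK : IsSplit K) (b : Bool) :
    IsSplit (lset K b) := by
  obtain ⟨h0, h2, hle⟩ := hK
  have hb : (if b then 1 else 0) ≤ 1 := by cases b <;> simp
  refine ⟨zero_mem_lset.mpr h0, ?_, ?_⟩ <;> rw [card_lset] <;> omega

lemma card_cherry (hn : 3 ≤ n) (x : Fin n) : (cherry x).card = if x = 0 then 2 else n - 1 := by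
  by_cases hx : x = 0
  · subst hx
    rw [cherry, if_pos rfl, if_pos rfl]
    rw [Finset.card_insert_of_notMem (by simp [Ne.symm last_ne_zero]), Finset.card_singleton]
  · rw [cherry, if_neg hx, if_neg hx]
    rw [Finset.card_sdiff_of_subset (Finset.subset_univ _)]
    rw [Finset.card_univ, Fintype.card_fin]
    rw [Finset.card_insert_of_notMem (by simp [(Fin.castSucc_lt_last x).ne]),
      Finset.card_singleton]
    omega

lemma isSplit_cherry (hn : 3 ≤ n) (x : Fin n) : IsSplit (cherry x) := by
  refine ⟨zero_mem_cherry, ?_, ?_⟩ <;> rw [card_cherry hn] <;>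
    by_cases hx : x = 0 <;> simp only [hx, if_pos, if_neg, if_true, if_false] <;> omega

lemma not_isSplit_down_cherry (hn : 3 ≤ n) (x : Fin n) : ¬ IsSplit (down (cherry x)) := by
  rw [down_cherry]
  by_cases hx : x = 0
  · rw [if_pos hx]
    rintro ⟨-, h2, -⟩
    rw [Finset.card_singleton] at h2
    omega
  · rw [if_neg hx]
    rintro ⟨-, -, hle⟩
    rw [Finset.card_erase_of_mem (Finset.mem_univ _), Finset.card_univ, Fintype.card_fin] at hle
    omega

lemma card_down_eq (I : Finset (Fin (n+1))) :
    I.card = (down I).card + (if Fin.last n ∈ I then 1 else 0) := by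
  conv_lhs => rw [← lset_down_eq I]
  rw [card_lset]
  by_cases h : Fin.last n ∈ I <;> simp [h]

lemma zero_mem_down {I : Finset (Fin (n+1))} (h : (0 : Fin (n+1)) ∈ I) :
    (0 : Fin n) ∈ down I := by
  rw [mem_down, castSucc_zero']; exact h

/-- classification: a split of `Fin (n+1)` whose trace is not a split is a cherry. -/
lemma classify (hn : 3 ≤ n) {I : Finset (Fin (n+1))} (hI : IsSplit I)
    (h : ¬ IsSplit (down I)) : ∃ x, I = cherry x := by
  obtain ⟨h0, h2, hle⟩ := hI
  have hd0 : (0 : Fin n) ∈ down I := zero_mem_down h0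
  have hcd := card_down_eq I
  have hdle : (down I).card ≤ n := by
    calc (down I).card ≤ (Finset.univ : Finset (Fin n)).card := Finset.card_le_card (Finset.subset_univ _)
    _ = n := by rw [Finset.card_univ, Fintype.card_fin]
  have hd1 : 1 ≤ (down I).card := Finset.card_pos.mpr ⟨0, hd0⟩
  have hns : ¬ (2 ≤ (down I).card ∧ (down I).card ≤ n - 2) := by
    intro ⟨a, b⟩; exact h ⟨hd0, a, b⟩
  have hsplit : (down I).card = 1 ∨ (down I).card = n - 1 ∨ (down I).card = n := by omega
  rcases hsplit with hc | hc | hc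
  · -- down I = {0}, last ∈ I, I = cherry 0
    have hdown : down I = {0} := by
      obtain ⟨a, ha⟩ := Finset.card_eq_one.mp hc
      rw [ha] at hd0 ⊢
      rw [Finset.mem_singleton] at hd0
      rw [hd0]
    have hlast : Fin.last n ∈ I := by
      by_contra hl
      simp [hl, hdown] at hcd
      omega
    refine ⟨0, ?_⟩
    rw [eq_coords]
    constructor
    · rw [hdown, down_cherry, if_pos rfl]
    · simp [hlast]
  · -- down I = univ.erase y, last ∉ I, I = cherry y
    have hlast : Fin.last n ∉ I := by
      intro hl
      simp only [hl, if_pos] at hcd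
      omega
    have hcompl : (Finset.univ \ down I).card = 1 := by
      rw [Finset.card_sdiff_of_subset (Finset.subset_univ _), Finset.card_univ, Fintype.card_fin, hc]
      omega
    obtain ⟨y, hy⟩ := Finset.card_eq_one.mp hcompl
    have hdown : down I = Finset.univ.erase y := by
      ext z
      have hz := Finset.ext_iff.mp hy z
      simp only [Finset.mem_sdiff, Finset.mem_univ, true_and, Finset.mem_singleton] at hz
      simp only [Finset.mem_erase, Finset.mem_univ, and_true]
      constructor
      · intro hmem hzy
        rw [← hz] at hzy
        exact hzy hmem
      · intro hzy
        by_contra hmem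
        exact hzy (hz.mp hmem)
    have hy0 : y ≠ 0 := by
      intro hy0
      rw [hdown, hy0] at hd0
      exact (Finset.mem_erase.mp hd0).1 rfl
    refine ⟨y, ?_⟩
    rw [eq_coords]
    constructor
    · rw [hdown, down_cherry, if_neg hy0]
    · simp [hlast, hy0]
  · -- impossible: I too big
    exfalso; omega

end Splits

section Compat
variable [NeZero n]

lemma compat_comm {I J : Finset (Fin n)} : Compatible I J ↔ Compatible J I := by
  unfold Compatible
  rw [Finset.union_comm]
  tauto

@[simp] lemma down_univ : down (Finset.univ : Finset (Fin (n+1))) = Finset.univ := by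
  ext x; simp

lemma compat_down {I I' : Finset (Fin (n+1))} (h : Compatible I I') :
    Compatible (down I) (down I') := by
  rcases h with h | h | h
  · exact Or.inl ((subset_coords.mp h).1)
  · exact Or.inr (Or.inl ((subset_coords.mp h).1))
  · exact Or.inr (Or.inr (by rw [← down_union, h, down_univ]))

lemma compat_lset_lset {J K : Finset (Fin n)} {a b : Bool} :
    Compatible (lset J a) (lset K b) ↔
      ((J ⊆ K ∧ (a = true → b = true)) ∨ (K ⊆ J ∧ (b = true → a = true)) ∨
        (J ∪ K = Finset.univ ∧ (a = true ∨ b = true))) := by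
  unfold Compatible
  rw [subset_coords, subset_coords, union_univ_coords]
  simp only [down_lset, last_mem_lset]

lemma split_ne_univ {K : Finset (Fin n)} (hK : IsSplit K) : K ≠ Finset.univ := by
  intro h
  have := hK.2.2
  rw [h, Finset.card_univ, Fintype.card_fin] at this
  have h1 : 1 ≤ n := Nat.pos_of_ne_zero (NeZero.ne n)
  omega

lemma card_univ_erase (x : Fin n) : (Finset.univ.erase x).card = n - 1 := by
  rw [Finset.card_erase_of_mem (Finset.mem_univ _), Finset.card_univ, Fintype.card_fin]

lemma univ_erase_not_subset_split (hn : 3 ≤ n) {x : Fin n} {K : Finset (Fin n)}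
    (hK : IsSplit K) : ¬ Finset.univ.erase x ⊆ K := by
  intro h
  have := Finset.card_le_card h
  rw [card_univ_erase] at this
  have := hK.2.2
  omega

lemma univ_erase_union_iff {x : Fin n} {K : Finset (Fin n)} :
    Finset.univ.erase x ∪ K = Finset.univ ↔ x ∈ K := by
  constructor
  · intro h
    have : x ∈ Finset.univ.erase x ∪ K := by rw [h]; exact Finset.mem_univ _
    rcases Finset.mem_union.mp this with h' | h'
    · exact absurd rfl (Finset.mem_erase.mp h').1
    · exact h'
  · intro h
    ext y
    simp only [Finset.mem_union, Finset.mem_erase, Finset.mem_univ, iff_true, and_true]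
    by_cases hy : y = x
    · exact Or.inr (hy ▸ h)
    · exact Or.inl hy

lemma compat_cherry_lset (hn : 3 ≤ n) {x : Fin n} {K : Finset (Fin n)} {b : Bool}
    (hK : IsSplit K) : Compatible (cherry x) (lset K b) ↔ b = decide (x ∈ K) := by
  unfold Compatible
  rw [subset_coords, subset_coords, union_univ_coords]
  simp only [down_lset, last_mem_lset, down_cherry, last_mem_cherry]
  by_cases hx : x = 0
  · subst hx
    rw [if_pos rfl]
    have h0K : (0 : Fin n) ∈ K := hK.1
    have hd : decide ((0:Fin n) ∈ K) = true := by simp [h0K]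
    rw [hd]
    constructor
    · rintro (⟨-, h⟩ | ⟨h, -⟩ | ⟨h, -⟩)
      · exact h (by trivial)
      · exfalso
        have := Finset.card_le_card h
        rw [Finset.card_singleton] at this
        have := hK.2.1
        omega
      · exfalso
        apply split_ne_univ hK
        have : ({0} : Finset (Fin n)) ∪ K = K := by
          rw [Finset.union_eq_right, Finset.singleton_subset_iff]; exact h0K
        rw [← h, this]
    · intro hb
      exact Or.inl ⟨Finset.singleton_subset_iff.mpr h0K, fun _ => hb⟩
  · rw [if_neg hx]
    have hxf : (x = 0) = False := by simp [hx]
    simp only [hxf, false_implies, false_or, and_true, iff_false, implies_true, and_imp]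
    constructor
    · rintro (h | ⟨h1, h2⟩ | ⟨h1, h2⟩)
      · exact absurd h (univ_erase_not_subset_split hn hK)
      · have hxK : x ∉ K := fun hxK => (Finset.mem_erase.mp (h1 hxK)).1 rfl
        cases b
        · simp [hxK]
        · exact absurd rfl h2
      · have hxK : x ∈ K := univ_erase_union_iff.mp h1
        simp [hxK, h2]
    · intro hb
      by_cases hxK : x ∈ K
      · refine Or.inr (Or.inr ⟨univ_erase_union_iff.mpr hxK, ?_⟩)
        simpa [hxK] using hb
      · refine Or.inr (Or.inl ⟨?_, ?_⟩)
        · intro y hy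
          exact Finset.mem_erase.mpr ⟨fun h => hxK (h ▸ hy), Finset.mem_univ _⟩
        · intro h
          rw [hb] at h
          simp [hxK] at h

lemma cherry_incompat (hn : 3 ≤ n) {x y : Fin n} (hxy : x ≠ y) :
    ¬ Compatible (cherry x) (cherry y) := by
  unfold Compatible
  rw [subset_coords, subset_coords, union_univ_coords]
  simp only [down_cherry, last_mem_cherry]
  rintro (⟨h1, h2⟩ | ⟨h1, h2⟩ | ⟨h1, h2⟩)
  · by_cases hx : x = 0
    · subst hx
      rw [if_pos rfl, if_neg (Ne.symm hxy)] at h1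
      have := h2 (by trivial)
      exact Ne.symm hxy this
    · by_cases hy : y = 0
      · subst hy
        rw [if_neg hx, if_pos rfl] at h1
        have := Finset.card_le_card h1
        rw [card_univ_erase, Finset.card_singleton] at this
        omega
      · rw [if_neg hx, if_neg hy] at h1
        have : y ∈ Finset.univ.erase x := Finset.mem_erase.mpr ⟨Ne.symm hxy, Finset.mem_univ _⟩
        exact (Finset.mem_erase.mp (h1 this)).1 rfl
  · by_cases hy : y = 0
    · subst hy
      rw [if_pos rfl, if_neg hxy] at h1
      have := h2 (by trivial)
      exact hxy this
    · by_cases hx : x = 0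
      · subst hx
        rw [if_neg hy, if_pos rfl] at h1
        have := Finset.card_le_card h1
        rw [card_univ_erase, Finset.card_singleton] at this
        omega
      · rw [if_neg hy, if_neg hx] at h1
        have : x ∈ Finset.univ.erase y := Finset.mem_erase.mpr ⟨hxy, Finset.mem_univ _⟩
        exact (Finset.mem_erase.mp (h1 this)).1 rfl
  · by_cases hx : x = 0
    · subst hx
      rw [if_pos rfl, if_neg (Ne.symm hxy)] at h1
      have : y ∈ ({0} : Finset (Fin n)) ∪ Finset.univ.erase y := by
        rw [h1]; exact Finset.mem_univ _
      rcases Finset.mem_union.mp this with h | h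
      · rw [Finset.mem_singleton] at h
        exact hxy h.symm
      · exact (Finset.mem_erase.mp h).1 rfl
    · by_cases hy : y = 0
      · subst hy
        rw [if_neg hx, if_pos rfl] at h1
        have : x ∈ Finset.univ.erase x ∪ ({0} : Finset (Fin n)) := by
          rw [h1]; exact Finset.mem_univ _
        rcases Finset.mem_union.mp this with h | h
        · exact (Finset.mem_erase.mp h).1 rfl
        · rw [Finset.mem_singleton] at h
          exact hx h
      · rcases h2 with h | h
        · exact hx h
        · exact hy h

/-- the side of split `K` on which the new leaf lies, when attached at edge `J`. -/
def sideM (J K : Finset (Fin n)) : Bool := decide (J ⊆ K ∨ J ∪ K = Finset.univ)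

lemma forced_side (hn : 3 ≤ n) {J K : Finset (Fin n)} (hJ : IsSplit J) (hK : IsSplit K)
    (hJK : J ≠ K) {b : Bool}
    (h0 : Compatible (lset J false) (lset K b))
    (h1 : Compatible (lset J true) (lset K b)) : b = sideM J K := by
  rw [compat_lset_lset] at h0 h1
  have hKuniv := split_ne_univ hK
  have hJuniv := split_ne_univ hJ
  cases b
  · -- show sideM J K = false
    symm
    rw [sideM, decide_eq_false_iff_not]
    rintro (hsub | huniv)
    · rcases h1 with ⟨-, h⟩ | ⟨h, -⟩ | ⟨h, -⟩
      · exact absurd (h rfl) (by simp)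
      · exact hJK (Finset.Subset.antisymm hsub h)
      · exact hKuniv (by rw [← Finset.union_eq_right.mpr hsub, h])
    · rcases h0 with ⟨h, -⟩ | ⟨h, -⟩ | ⟨-, h⟩
      · exact hKuniv (by rw [← Finset.union_eq_right.mpr h, huniv])
      · exact hJuniv (by rw [← Finset.union_eq_left.mpr h, huniv])
      · simp at h
  · -- show sideM J K = true
    symm
    rw [sideM, decide_eq_true_eq]
    rcases h0 with ⟨h, -⟩ | ⟨-, h⟩ | ⟨h, -⟩
    · exact Or.inl h
    · simp at h
    · exact Or.inr h

end Compat

section Psi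
variable [NeZero n]

/-- trace of a family of subsets of `Fin (n+1)` on `Fin n`, keeping only splits. -/
def psi (C : Finset (Finset (Fin (n+1)))) : Finset (Finset (Fin n)) :=
  (C.image down).filter IsSplit

lemma mem_psi_of {C : Finset (Finset (Fin (n+1)))} {I : Finset (Fin (n+1))}
    (hI : I ∈ C) (h : IsSplit (down I)) : down I ∈ psi C :=
  Finset.mem_filter.mpr ⟨Finset.mem_image_of_mem _ hI, h⟩

lemma psi_splits {C : Finset (Finset (Fin (n+1)))} :
    ∀ K ∈ psi C, IsSplit K := fun _ hK => (Finset.mem_filter.mp hK).2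

lemma psi_compat {C : Finset (Finset (Fin (n+1)))}
    (hcomp : ∀ I ∈ C, ∀ J ∈ C, I ≠ J → Compatible I J) :
    ∀ K ∈ psi C, ∀ K' ∈ psi C, K ≠ K' → Compatible K K' := by
  intro K hK K' hK' hne
  obtain ⟨I, hI, rfl⟩ := Finset.mem_image.mp (Finset.mem_filter.mp hK).1
  obtain ⟨I', hI', rfl⟩ := Finset.mem_image.mp (Finset.mem_filter.mp hK').1
  exact compat_down (hcomp I hI I' hI' (fun h => hne (by rw [h])))

lemma eq_lset_of_mem {I : Finset (Fin (n+1))} (hl : Fin.last n ∈ I) :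
    I = lset (down I) true := by
  have hd : decide (Fin.last n ∈ I) = true := by simp [hl]
  conv_lhs => rw [← lset_down_eq I]
  rw [hd]

lemma eq_lset_of_notMem {I : Finset (Fin (n+1))} (hl : Fin.last n ∉ I) :
    I = lset (down I) false := by
  have hd : decide (Fin.last n ∈ I) = false := by simp [hl]
  conv_lhs => rw [← lset_down_eq I]
  rw [hd]

lemma collision_forms {I I' : Finset (Fin (n+1))} (h : down I = down I') (hne : I ≠ I') :
    (I = lset (down I) false ∧ I' = lset (down I) true) ∨
      (I = lset (down I) true ∧ I' = lset (down I) false) := by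
  by_cases hl : Fin.last n ∈ I <;> by_cases hl' : Fin.last n ∈ I'
  · exact absurd (by rw [eq_lset_of_mem hl, eq_lset_of_mem hl', h]) hne
  · exact Or.inr ⟨eq_lset_of_mem hl, by rw [eq_lset_of_notMem hl', ← h]⟩
  · exact Or.inl ⟨eq_lset_of_notMem hl, by rw [eq_lset_of_mem hl', ← h]⟩
  · exact absurd (by rw [eq_lset_of_notMem hl, eq_lset_of_notMem hl', h]) hne

/-- A pairwise-compatible family of splits of `Fin (n+1)` loses at most one element
when traced down to `Fin n`. -/
lemma card_le_psi_succ (hn : 3 ≤ n) {D : Finset (Finset (Fin (n+1)))}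
    (hsp : ∀ I ∈ D, IsSplit I)
    (hcomp : ∀ I ∈ D, ∀ J ∈ D, I ≠ J → Compatible I J) :
    D.card ≤ (psi D).card + 1 := by
  by_cases hch : ∃ x, cherry x ∈ D
  · obtain ⟨x, hx⟩ := hch
    have key : ∀ I ∈ D.erase (cherry x), IsSplit (down I) := by
      intro I hI
      obtain ⟨hIne, hID⟩ := Finset.mem_erase.mp hI
      by_contra hns
      obtain ⟨y, rfl⟩ := classify hn (hsp I hID) hns
      have hyx : y ≠ x := fun h => hIne (by rw [h])
      exact cherry_incompat hn hyx (hcomp _ hID _ hx hIne)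
    have hmap : ∀ I ∈ D.erase (cherry x), down I ∈ psi D := fun I hI =>
      mem_psi_of (Finset.mem_of_mem_erase hI) (key I hI)
    have hinj : Set.InjOn down ((D.erase (cherry x) : Finset (Finset (Fin (n+1)))) : Set (Finset (Fin (n+1)))) := by
      intro I hI I' hI' hdd
      rw [Finset.mem_coe] at hI hI'
      by_contra hne
      rcases collision_forms hdd hne with ⟨h1, h2⟩ | ⟨h1, h2⟩ <;>
      · have hJ : IsSplit (down I) := key I hI
        have c1 := hcomp _ hx _ (Finset.mem_of_mem_erase hI)
          (fun h => (Finset.mem_erase.mp hI).1 h.symm)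
        have c2 := hcomp _ hx _ (Finset.mem_of_mem_erase hI')
          (fun h => (Finset.mem_erase.mp hI').1 h.symm)
        rw [h1] at c1
        rw [h2] at c2
        rw [compat_cherry_lset hn hJ] at c1 c2
        rw [← c1] at c2
        simp at c2
    calc D.card = (D.erase (cherry x)).card + 1 := (Finset.card_erase_add_one hx).symm
    _ ≤ (psi D).card + 1 := by
      have := Finset.card_le_card_of_injOn down hmap hinj
      omega
  · push_neg at hch
    have key : ∀ I ∈ D, IsSplit (down I) := by
      intro I hID
      by_contra hns
      obtain ⟨y, rfl⟩ := classify hn (hsp I hID) hns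
      exact hch y hID
    by_cases hinj : Set.InjOn down (D : Set (Finset (Fin (n+1))))
    · have := Finset.card_le_card_of_injOn down
        (fun I hI => mem_psi_of hI (key I hI)) hinj
      omega
    · rw [Set.InjOn] at hinj
      push_neg at hinj
      obtain ⟨I, hI, I', hI', hdd, hne⟩ := hinj
      rw [Finset.mem_coe] at hI hI'
      -- normalize so that I = lset J false, I' = lset J true
      obtain ⟨J, hJsp, hIf, hIt, hIJ, hI'J⟩ :
          ∃ J, IsSplit J ∧ lset J false ∈ D ∧ lset J true ∈ D ∧
            down I = J ∧ down I' = J := by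
        rcases collision_forms hdd hne with ⟨h1, h2⟩ | ⟨h1, h2⟩
        · exact ⟨down I, key I hI, by rw [← h1]; exact hI, by rw [← h2]; exact hI', rfl, hdd.symm⟩
        · exact ⟨down I, key I hI, by rw [← h2]; exact hI', by rw [← h1]; exact hI, rfl, hdd.symm⟩
      have hne' : lset J true ≠ lset J false := by
        intro h
        have := congrArg (fun s => Fin.last n ∈ s) h
        simp at this
      have hinj2 : Set.InjOn down ((D.erase (lset J true) : Finset (Finset (Fin (n+1)))) : Set (Finset (Fin (n+1)))) := by
        intro A hA A' hA' hdA
        rw [Finset.mem_coe] at hA hA'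
        by_contra hneA
        have hKsp : IsSplit (down A) := key A (Finset.mem_of_mem_erase hA)
        by_cases hKJ : down A = J
        · -- both A, A' would be among lset J false/true, but lset J true is erased
          have hAt : A ≠ lset J true := (Finset.mem_erase.mp hA).1
          have hA't : A' ≠ lset J true := (Finset.mem_erase.mp hA').1
          rcases collision_forms hdA hneA with ⟨h1, h2⟩ | ⟨h1, h2⟩
          · exact hA't (by rw [h2, hKJ])
          · exact hAt (by rw [h1, hKJ])
        · -- forced side applied to both A and A' gives A = A'
          have mkb : ∀ B ∈ D.erase (lset J true), down B = down A →
              B = lset (down A) (sideM J (down A)) := by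
            intro B hB hdB
            have hBD := Finset.mem_of_mem_erase hB
            have hBf : lset J false ≠ B := by
              intro h
              rw [← h, down_lset] at hdB
              exact hKJ hdB.symm
            have hBt : lset J true ≠ B := fun h => (Finset.mem_erase.mp hB).1 h.symm
            have c0 := hcomp _ hIf _ hBD hBf
            have c1 := hcomp _ hIt _ hBD hBt
            have hBform := lset_down_eq B
            rw [← hBform, hdB] at c0 c1 ⊢
            rw [forced_side hn hJsp (hdB ▸ key B hBD) (fun h => hKJ h.symm) c0 c1]
          have e1 := mkb A hA rfl
          have e2 := mkb A' hA' hdA.symm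
          exact hneA (by rw [e1, e2])
      have hmap : ∀ A ∈ D.erase (lset J true), down A ∈ psi D := fun A hA =>
        mem_psi_of (Finset.mem_of_mem_erase hA) (key A (Finset.mem_of_mem_erase hA))
      calc D.card = (D.erase (lset J true)).card + 1 := (Finset.card_erase_add_one hIt).symm
      _ ≤ (psi D).card + 1 := by
        have := Finset.card_le_card_of_injOn down hmap hinj2
        omega

end Psi

/-- Upper bound: a pairwise compatible family of splits of `Fin n` has at most `n-3` members. -/
theorem compat_card_le : ∀ n : ℕ, 3 ≤ n → ∀ [NeZero n], ∀ D : Finset (Finset (Fin n)),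
    (∀ I ∈ D, IsSplit I) → (∀ I ∈ D, ∀ J ∈ D, I ≠ J → Compatible I J) → D.card ≤ n - 3 := by
  intro n hn
  induction n, hn using Nat.le_induction with
  | base =>
    intro _ D hsp _
    have : D = ∅ := by
      apply Finset.eq_empty_of_forall_notMem
      intro I hI
      have := hsp I hI
      have h1 := this.2.1
      have h2 := this.2.2
      omega
    simp [this]
  | succ n hn IH =>
    intro _ D hsp hcomp
    haveI : NeZero n := ⟨by omega⟩
    have h1 := psi_splits (C := D)
    have h2 := psi_compat (C := D) hcomp
    have h3 := IH (psi D) h1 h2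
    have h4 := card_le_psi_succ hn hsp hcomp
    omega

section LiftChannels
variable [NeZero n]

/-- The lift channel obtained by attaching the new leaf at leaf `x`. -/
def Lc (C' : Finset (Finset (Fin n))) (x : Fin n) : Finset (Finset (Fin (n+1))) :=
  insert (cherry x) (C'.image (fun K => lset K (decide (x ∈ K))))

/-- The lift channel obtained by attaching the new leaf at the edge `J`. -/
def Mc (C' : Finset (Finset (Fin n))) (J : Finset (Fin n)) : Finset (Finset (Fin (n+1))) :=
  insert (lset J false) (C'.image (fun K => lset K (sideM J K)))

lemma lset_inj {K K' : Finset (Fin n)} {b b' : Bool} (h : lset K b = lset K' b') :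
    K = K' ∧ b = b' := by
  constructor
  · rw [← down_lset (K := K) (b := b), h, down_lset]
  · have := congrArg (fun s => Fin.last n ∈ s) h
    simp only [last_mem_lset] at this
    cases b <;> cases b' <;> simp_all

lemma cherry_ne_lset (hn : 3 ≤ n) {x : Fin n} {K : Finset (Fin n)} {b : Bool}
    (hK : IsSplit K) : cherry x ≠ lset K b := by
  intro h
  apply not_isSplit_down_cherry hn x
  rw [h, down_lset]
  exact hK

lemma cherry_inj {x y : Fin n} (h : cherry x = cherry y) : x = y := by
  have hl := congrArg (fun s => Fin.last n ∈ s) h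
  simp only [last_mem_cherry] at hl
  have hd := congrArg down h
  rw [down_cherry, down_cherry] at hd
  by_cases hx : x = 0
  · rw [hx]; exact (hl.mp hx).symm ▸ rfl
  · have hy : ¬ y = 0 := fun hy => hx (hl.mpr hy)
    rw [if_neg hx, if_neg hy] at hd
    by_contra hne
    have : x ∈ Finset.univ.erase y := Finset.mem_erase.mpr ⟨hne, Finset.mem_univ _⟩
    rw [← hd] at this
    exact (Finset.mem_erase.mp this).1 rfl

lemma sideM_self (J : Finset (Fin n)) : sideM J J = true := by
  simp [sideM]

lemma sideM_mono {J K K' : Finset (Fin n)} (h : K ⊆ K') (hs : sideM J K = true) :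
    sideM J K' = true := by
  rw [sideM, decide_eq_true_eq] at hs ⊢
  rcases hs with hs | hs
  · exact Or.inl (hs.trans h)
  · right
    apply Finset.univ_subset_iff.mp
    rw [← hs]
    exact Finset.union_subset_union_right h

lemma sideM_union {J K K' : Finset (Fin n)} (hJ : IsSplit J)
    (hcK : Compatible J K) (hcK' : Compatible J K') (hu : K ∪ K' = Finset.univ) :
    sideM J K = true ∨ sideM J K' = true := by
  by_contra hb
  push_neg at hb
  obtain ⟨h1, h2⟩ := hb
  simp only [sideM, ne_eq, decide_eq_true_eq] at h1 h2
  push_neg at h1 h2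
  have hK : K ⊆ J := by
    rcases hcK with h | h | h
    · exact absurd h h1.1
    · exact h
    · exact absurd h h1.2
  have hK' : K' ⊆ J := by
    rcases hcK' with h | h | h
    · exact absurd h h2.1
    · exact h
    · exact absurd h h2.2
  apply split_ne_univ hJ
  apply Finset.univ_subset_iff.mp
  rw [← hu]
  exact Finset.union_subset hK hK'

lemma compat_refl (K : Finset (Fin n)) : Compatible K K := Or.inl (Finset.Subset.refl K)

variable {C' : Finset (Finset (Fin n))}

lemma mem_Lc {x : Fin n} {I : Finset (Fin (n+1))} :
    I ∈ Lc C' x ↔ I = cherry x ∨ ∃ K ∈ C', I = lset K (decide (x ∈ K)) := by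
  simp only [Lc, Finset.mem_insert, Finset.mem_image]
  constructor
  · rintro (h | ⟨K, hK, h⟩)
    · exact Or.inl h
    · exact Or.inr ⟨K, hK, h.symm⟩
  · rintro (h | ⟨K, hK, h⟩)
    · exact Or.inl h
    · exact Or.inr ⟨K, hK, h.symm⟩

lemma mem_Mc {J : Finset (Fin n)} {I : Finset (Fin (n+1))} :
    I ∈ Mc C' J ↔ I = lset J false ∨ ∃ K ∈ C', I = lset K (sideM J K) := by
  simp only [Mc, Finset.mem_insert, Finset.mem_image]
  constructor
  · rintro (h | ⟨K, hK, h⟩)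
    · exact Or.inl h
    · exact Or.inr ⟨K, hK, h.symm⟩
  · rintro (h | ⟨K, hK, h⟩)
    · exact Or.inl h
    · exact Or.inr ⟨K, hK, h.symm⟩

lemma card_Lc (hn : 3 ≤ n) (hC' : IsChannel C') (x : Fin n) :
    (Lc C' x).card = C'.card + 1 := by
  rw [Lc, Finset.card_insert_of_notMem, Finset.card_image_of_injOn]
  · intro K hK K' hK' h
    exact (lset_inj h).1
  · intro h
    obtain ⟨K, hK, h⟩ := Finset.mem_image.mp h
    exact cherry_ne_lset hn (hC'.2.1 K hK) h.symm

lemma card_Mc (hn : 3 ≤ n) (hC' : IsChannel C') {J : Finset (Fin n)} (hJ : J ∈ C') :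
    (Mc C' J).card = C'.card + 1 := by
  rw [Mc, Finset.card_insert_of_notMem, Finset.card_image_of_injOn]
  · intro K hK K' hK' h
    exact (lset_inj h).1
  · intro h
    obtain ⟨K, hK, h⟩ := Finset.mem_image.mp h
    obtain ⟨h1, h2⟩ := lset_inj h
    rw [h1, sideM_self] at h2
    exact Bool.noConfusion h2

lemma isChannel_Lc (hn : 3 ≤ n) (hC' : IsChannel C') (x : Fin n) :
    IsChannel (Lc C' x) := by
  obtain ⟨hcard, hsp, hcomp⟩ := hC'
  refine ⟨?_, ?_, ?_⟩
  · rw [card_Lc hn ⟨hcard, hsp, hcomp⟩ x, hcard]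
    omega
  · intro I hI
    rcases mem_Lc.mp hI with h | ⟨K, hK, h⟩
    · rw [h]; exact isSplit_cherry hn x
    · rw [h]; exact isSplit_lset (hsp K hK) _
  · intro I hI I' hI' hne
    rcases mem_Lc.mp hI with h | ⟨K, hK, h⟩ <;> rcases mem_Lc.mp hI' with h' | ⟨K', hK', h'⟩
    · exact absurd (h.trans h'.symm) hne
    · rw [h, h']
      exact (compat_cherry_lset hn (hsp K' hK')).mpr rfl
    · rw [h, h']
      rw [compat_comm]
      exact (compat_cherry_lset hn (hsp K hK)).mpr rfl
    · have hKK' : K ≠ K' := by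
        intro hEq
        exact hne (by rw [h, h', hEq])
      rw [h, h', compat_lset_lset]
      rcases hcomp K hK K' hK' hKK' with hc | hc | hc
      · refine Or.inl ⟨hc, ?_⟩
        simp only [decide_eq_true_eq]
        exact fun hx => hc hx
      · refine Or.inr (Or.inl ⟨hc, ?_⟩)
        simp only [decide_eq_true_eq]
        exact fun hx => hc hx
      · refine Or.inr (Or.inr ⟨hc, ?_⟩)
        have : x ∈ K ∪ K' := by rw [hc]; exact Finset.mem_univ _
        rcases Finset.mem_union.mp this with hx | hx
        · exact Or.inl (by simp [hx])
        · exact Or.inr (by simp [hx])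

lemma isChannel_Mc (hn : 3 ≤ n) (hC' : IsChannel C') {J : Finset (Fin n)} (hJ : J ∈ C') :
    IsChannel (Mc C' J) := by
  obtain ⟨hcard, hsp, hcomp⟩ := hC'
  have hJsp : IsSplit J := hsp J hJ
  have hcompJ : ∀ K ∈ C', Compatible J K := by
    intro K hK
    by_cases hKJ : K = J
    · rw [hKJ]; exact compat_refl J
    · exact hcomp J hJ K hK (fun h => hKJ h.symm)
  refine ⟨?_, ?_, ?_⟩
  · rw [card_Mc hn ⟨hcard, hsp, hcomp⟩ hJ, hcard]
    omega
  · intro I hI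
    rcases mem_Mc.mp hI with h | ⟨K, hK, h⟩
    · rw [h]; exact isSplit_lset hJsp _
    · rw [h]; exact isSplit_lset (hsp K hK) _
  · intro I hI I' hI' hne
    have main : ∀ K ∈ C', Compatible (lset J false) (lset K (sideM J K)) := by
      intro K hK
      rw [compat_lset_lset]
      by_cases hKJ : K = J
      · subst hKJ
        exact Or.inl ⟨Finset.Subset.refl K, by simp⟩
      · by_cases hs : sideM J K = true
        · have hs' := hs
          rw [sideM, decide_eq_true_eq] at hs'
          rcases hs' with hsub | hu
          · exact Or.inl ⟨hsub, by simp⟩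
          · exact Or.inr (Or.inr ⟨hu, Or.inr hs⟩)
        · have hKsub : K ⊆ J := by
            rw [sideM, decide_eq_true_eq] at hs
            push_neg at hs
            rcases hcompJ K hK with h | h | h
            · exact absurd h hs.1
            · exact h
            · exact absurd h hs.2
          exact Or.inr (Or.inl ⟨hKsub, fun h => absurd h hs⟩)
    rcases mem_Mc.mp hI with h | ⟨K, hK, h⟩ <;> rcases mem_Mc.mp hI' with h' | ⟨K', hK', h'⟩
    · exact absurd (h.trans h'.symm) hne
    · rw [h, h']
      exact main K' hK'
    · rw [h, h', compat_comm]
      exact main K hK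
    · have hKK' : K ≠ K' := by
        intro hEq
        exact hne (by rw [h, h', hEq])
      rw [h, h', compat_lset_lset]
      rcases hcomp K hK K' hK' hKK' with hc | hc | hc
      · exact Or.inl ⟨hc, fun hs => sideM_mono hc hs⟩
      · exact Or.inr (Or.inl ⟨hc, fun hs => sideM_mono hc hs⟩)
      · exact Or.inr (Or.inr ⟨hc, sideM_union hJsp (hcompJ K hK) (hcompJ K' hK') hc⟩)

lemma psi_Lc (hn : 3 ≤ n) (hC' : IsChannel C') (x : Fin n) :
    psi (Lc C' x) = C' := by
  ext K
  simp only [psi, Finset.mem_filter, Finset.mem_image]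
  constructor
  · rintro ⟨⟨I, hI, rfl⟩, hsp⟩
    rcases mem_Lc.mp hI with h | ⟨K', hK', h⟩
    · rw [h] at hsp
      exact absurd hsp (not_isSplit_down_cherry hn x)
    · rw [h, down_lset]
      exact hK'
  · intro hK
    exact ⟨⟨lset K (decide (x ∈ K)), mem_Lc.mpr (Or.inr ⟨K, hK, rfl⟩), down_lset⟩,
      hC'.2.1 K hK⟩

lemma psi_Mc (hn : 3 ≤ n) (hC' : IsChannel C') {J : Finset (Fin n)} (hJ : J ∈ C') :
    psi (Mc C' J) = C' := by
  ext K
  simp only [psi, Finset.mem_filter, Finset.mem_image]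
  constructor
  · rintro ⟨⟨I, hI, rfl⟩, hsp⟩
    rcases mem_Mc.mp hI with h | ⟨K', hK', h⟩
    · rw [h, down_lset]
      exact hJ
    · rw [h, down_lset]
      exact hK'
  · intro hK
    exact ⟨⟨lset K (sideM J K), mem_Mc.mpr (Or.inr ⟨K, hK, rfl⟩), down_lset⟩,
      hC'.2.1 K hK⟩

end LiftChannels

section Fiber
variable [NeZero n]

lemma psi_channel (hn : 3 ≤ n) {C : Finset (Finset (Fin (n+1)))}
    (hC : IsChannel C) : IsChannel (psi C) := by
  obtain ⟨hcard, hsp, hcomp⟩ := hC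
  refine ⟨?_, psi_splits, psi_compat hcomp⟩
  have h1 := card_le_psi_succ hn hsp hcomp
  have h2 := compat_card_le n hn (psi C) psi_splits (psi_compat hcomp)
  omega

lemma fiber_forms (hn : 3 ≤ n) {C : Finset (Finset (Fin (n+1)))} (hC : IsChannel C) :
    (∃ x, C = Lc (psi C) x) ∨ (∃ J ∈ psi C, C = Mc (psi C) J) := by
  have hpsi := psi_channel hn hC
  obtain ⟨hcard, hsp, hcomp⟩ := hC
  have hcardC : C.card = n - 2 := by rw [hcard]; omega
  have hcard' : (psi C).card = n - 3 := hpsi.1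
  by_cases hch : ∃ x, cherry x ∈ C
  · obtain ⟨x, hx⟩ := hch
    left
    refine ⟨x, ?_⟩
    have hsub : C ⊆ Lc (psi C) x := by
      intro I hI
      by_cases hIc : I = cherry x
      · rw [hIc]; exact Finset.mem_insert_self _ _
      · have hIsp := hsp I hI
        have hdsp : IsSplit (down I) := by
          by_contra hns
          obtain ⟨y, rfl⟩ := classify hn hIsp hns
          exact cherry_incompat hn (fun h : y = x => hIc (by rw [h]))
            (hcomp _ hI _ hx hIc)
        have hc := hcomp _ hx _ hI (fun h => hIc h.symm)
        have hform : I = lset (down I) (decide (Fin.last n ∈ I)) := (lset_down_eq I).symm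
        rw [hform] at hc
        have hb := (compat_cherry_lset hn hdsp).mp hc
        apply mem_Lc.mpr
        refine Or.inr ⟨down I, mem_psi_of hI hdsp, ?_⟩
        conv_lhs => rw [hform]
        rw [hb]
    apply Finset.eq_of_subset_of_card_le hsub
    rw [card_Lc hn hpsi x, hcard', hcardC]
    omega
  · push_neg at hch
    have key : ∀ I ∈ C, IsSplit (down I) := by
      intro I hI
      by_contra hns
      obtain ⟨y, rfl⟩ := classify hn (hsp I hI) hns
      exact hch y hI
    have hninj : ¬ Set.InjOn down ((C : Finset (Finset (Fin (n+1)))) :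
        Set (Finset (Fin (n+1)))) := by
      intro hinj
      have := Finset.card_le_card_of_injOn down
        (fun I hI => mem_psi_of hI (key I hI)) hinj
      omega
    rw [Set.InjOn] at hninj
    push_neg at hninj
    obtain ⟨I, hI, I', hI', hdd, hne⟩ := hninj
    rw [Finset.mem_coe] at hI hI'
    obtain ⟨J, hJsp, hIf, hIt⟩ :
        ∃ J, IsSplit J ∧ lset J false ∈ C ∧ lset J true ∈ C := by
      rcases collision_forms hdd hne with ⟨h1, h2⟩ | ⟨h1, h2⟩
      · exact ⟨down I, key I hI, by rw [← h1]; exact hI, by rw [← h2]; exact hI'⟩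
      · exact ⟨down I, key I hI, by rw [← h2]; exact hI', by rw [← h1]; exact hI⟩
    right
    have hJmem : J ∈ psi C := by
      have := mem_psi_of hIf (by rw [down_lset]; exact hJsp)
      rwa [down_lset] at this
    refine ⟨J, hJmem, ?_⟩
    have hsub : C ⊆ Mc (psi C) J := by
      intro A hA
      have hAsp := key A hA
      by_cases hKJ : down A = J
      · by_cases hl : Fin.last n ∈ A
        · have hform : A = lset J true := by rw [eq_lset_of_mem hl, hKJ]
          rw [hform]
          exact mem_Mc.mpr (Or.inr ⟨J, hJmem, by rw [sideM_self]⟩)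
        · have hform : A = lset J false := by rw [eq_lset_of_notMem hl, hKJ]
          rw [hform]
          exact Finset.mem_insert_self _ _
      · have hAform : lset (down A) (decide (Fin.last n ∈ A)) = A := lset_down_eq A
        have hAfne : lset J false ≠ A := fun h => hKJ (by rw [← h, down_lset])
        have hAtne : lset J true ≠ A := fun h => hKJ (by rw [← h, down_lset])
        have c0 := hcomp _ hIf _ hA hAfne
        have c1 := hcomp _ hIt _ hA hAtne
        rw [← hAform] at c0 c1
        have hb := forced_side hn hJsp hAsp (fun h => hKJ h.symm) c0 c1
        apply mem_Mc.mpr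
        refine Or.inr ⟨down A, mem_psi_of hA hAsp, ?_⟩
        conv_lhs => rw [← hAform]
        rw [hb]
    apply Finset.eq_of_subset_of_card_le hsub
    rw [card_Mc hn hpsi hJmem, hcard', hcardC]
    omega

variable {C' : Finset (Finset (Fin n))}

lemma Lc_ne_Mc (hn : 3 ≤ n) (hC' : IsChannel C') {J : Finset (Fin n)} (hJ : J ∈ C')
    (x : Fin n) : Lc C' x ≠ Mc C' J := by
  intro h
  have h1 : lset J false ∈ Lc C' x := by rw [h]; exact Finset.mem_insert_self _ _
  have h2 : lset J true ∈ Lc C' x := by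
    rw [h]; exact mem_Mc.mpr (Or.inr ⟨J, hJ, by rw [sideM_self]⟩)
  rcases mem_Lc.mp h1 with hh | ⟨K, hK, hh⟩
  · exact cherry_ne_lset hn (hC'.2.1 J hJ) hh.symm
  · obtain ⟨hK1, hb1⟩ := lset_inj hh
    rcases mem_Lc.mp h2 with hh' | ⟨K', hK', hh'⟩
    · exact cherry_ne_lset hn (hC'.2.1 J hJ) hh'.symm
    · obtain ⟨hK2, hb2⟩ := lset_inj hh'
      rw [← hK1] at hb1
      rw [← hK2] at hb2
      rw [← hb1] at hb2
      exact Bool.noConfusion hb2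

lemma Lc_injective (hn : 3 ≤ n) (hC' : IsChannel C') :
    Function.Injective (Lc C') := by
  intro x y h
  have h1 : cherry x ∈ Lc C' y := by rw [← h]; exact Finset.mem_insert_self _ _
  rcases mem_Lc.mp h1 with hh | ⟨K, hK, hh⟩
  · exact cherry_inj hh
  · exact absurd hh (cherry_ne_lset hn (hC'.2.1 K hK))

lemma Mc_injOn (hn : 3 ≤ n) (hC' : IsChannel C') {J K : Finset (Fin n)}
    (hJ : J ∈ C') (hK : K ∈ C') (h : Mc C' J = Mc C' K) : J = K := by
  have h1 : lset J false ∈ Mc C' K := by rw [← h]; exact Finset.mem_insert_self _ _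
  have h2 : lset J true ∈ Mc C' K := by
    rw [← h]; exact mem_Mc.mpr (Or.inr ⟨J, hJ, by rw [sideM_self]⟩)
  rcases mem_Mc.mp h1 with hh | ⟨K1, hK1, hh⟩
  · exact (lset_inj hh).1
  · obtain ⟨e1, e2⟩ := lset_inj hh
    rcases mem_Mc.mp h2 with hh' | ⟨K2, hK2, hh'⟩
    · exact absurd (lset_inj hh').2 (by simp)
    · obtain ⟨e3, e4⟩ := lset_inj hh'
      rw [← e1] at e2
      rw [← e3] at e4
      rw [← e2] at e4
      exact absurd e4 (by simp)

end Fiber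

/-- The set of scattering channels, as a `Finset`. -/
def chanSet (n : ℕ) [NeZero n] : Finset (Finset (Finset (Fin n))) :=
  Finset.univ.filter (IsChannel (n := n))

lemma mem_chanSet {n : ℕ} [NeZero n] {C : Finset (Finset (Fin n))} :
    C ∈ chanSet n ↔ IsChannel C := by
  simp [chanSet]

section FiberCount
variable [NeZero n] {C' : Finset (Finset (Fin n))}

lemma fiber_eq (hn : 3 ≤ n) (hC' : IsChannel C') :
    (chanSet (n+1)).filter (fun C => psi C = C') =
      (Finset.univ.image (Lc C')) ∪ (C'.image (Mc C')) := by
  ext C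
  simp only [Finset.mem_filter, Finset.mem_union, Finset.mem_image, Finset.mem_univ,
    true_and, mem_chanSet]
  constructor
  · rintro ⟨hC, hpsi⟩
    rcases fiber_forms hn hC with ⟨x, hx⟩ | ⟨J, hJ, hJx⟩
    · rw [hpsi] at hx
      exact Or.inl ⟨x, hx.symm⟩
    · rw [hpsi] at hJ hJx
      exact Or.inr ⟨J, hJ, hJx.symm⟩
  · rintro (⟨x, rfl⟩ | ⟨J, hJ, rfl⟩)
    · exact ⟨isChannel_Lc hn hC' x, psi_Lc hn hC' x⟩
    · exact ⟨isChannel_Mc hn hC' hJ, psi_Mc hn hC' hJ⟩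

lemma fiber_card (hn : 3 ≤ n) (hC' : IsChannel C') :
    ((chanSet (n+1)).filter (fun C => psi C = C')).card = 2*n - 3 := by
  rw [fiber_eq hn hC', Finset.card_union_of_disjoint, Finset.card_image_of_injective _
    (Lc_injective hn hC'), Finset.card_image_of_injOn
    (fun J hJ K hK h => Mc_injOn hn hC' hJ hK h)]
  · rw [Finset.card_univ, Fintype.card_fin, hC'.1]
    omega
  · rw [Finset.disjoint_left]
    rintro A hA hA'
    obtain ⟨x, -, hx⟩ := Finset.mem_image.mp hA
    obtain ⟨J, hJ, hJx⟩ := Finset.mem_image.mp hA'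
    exact Lc_ne_Mc hn hC' hJ x (hx.trans hJx.symm)

end FiberCount

theorem chanSet_card : ∀ n : ℕ, 3 ≤ n → ∀ [NeZero n],
    (chanSet n).card = Nat.doubleFactorial (2*n - 5) := by
  intro n hn
  induction n, hn using Nat.le_induction with
  | base =>
    intro _
    have h : chanSet 3 = {∅} := by
      ext C
      rw [mem_chanSet, Finset.mem_singleton]
      constructor
      · intro hC
        exact Finset.card_eq_zero.mp hC.1
      · rintro rfl
        exact ⟨rfl, fun I hI => absurd hI (Finset.notMem_empty I),
          fun I hI => absurd hI (Finset.notMem_empty I)⟩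
    rw [h, Finset.card_singleton]
    rfl
  | succ n hn IH =>
    intro _
    haveI : NeZero n := ⟨by omega⟩
    have hmap : ∀ C ∈ chanSet (n+1), psi C ∈ chanSet n := by
      intro C hC
      rw [mem_chanSet] at hC ⊢
      exact psi_channel hn hC
    rw [Finset.card_eq_sum_card_fiberwise hmap]
    rw [Finset.sum_congr rfl (fun C' hC' => fiber_card hn (mem_chanSet.mp hC'))]
    rw [Finset.sum_const, smul_eq_mul, IH]
    have h5 : 2 * (n+1) - 5 = (2*n - 5) + 2 := by omega
    have h3 : 2*n - 5 + 2 = 2*n - 3 := by omega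
    rw [h5, Nat.doubleFactorial_add_two, h3]
    ring

end ChanAux

/-- The number of scattering channels of `Fin n` — sets of `n-3` pairwise compatible
splits — equals `(2n-5)!!`, the total number of distinct `n`-point trivalent Feynman
diagrams. -/
theorem card_channels_eq_doubleFactorial (n : ℕ) [NeZero n] (hn : 3 ≤ n) :
    { C : Finset (Finset (Fin n)) | IsChannel C }.ncard =
      Nat.doubleFactorial (2 * n - 5) := by
  have hset : { C : Finset (Finset (Fin n)) | IsChannel C } = ↑(ChanAux.chanSet n) := by
    ext C
    rw [Set.mem_setOf_eq, Finset.mem_coe, ChanAux.mem_chanSet]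
  rw [hset, Set.ncard_coe_finset]
  exact ChanAux.chanSet_card n hn
end

section
/- A set of pairwise compatible poles has at most n−3 elements: for n ≥ 3, every set C of splits of Fin n whose elements are pairwise compatible satisfies |C| ≤ n − 3. (Hence scattering channels, defined as pairwise compatible families of exactly n−3 splits, are precisely the maximal such families, matching the n−3 propagators of an n-point trivalent Feynman diagram.) -/
lemma laminar_card {α : Type*} [DecidableEq α] (S : Finset α) :
    ∀ (F : Finset (Finset α)),
      (∀ A ∈ F, A ⊆ S) → (∀ A ∈ F, 2 ≤ A.card) →
      (∀ A ∈ F, ∀ B ∈ F, A ⊆ B ∨ B ⊆ A ∨ Disjoint A B) →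
      F.card ≤ S.card - 1 := by
  induction S using Finset.strongInduction with
  | _ S IH =>
    intro F hsub hcard hlam
    rcases F.eq_empty_or_nonempty with rfl | hF
    · simp
    obtain ⟨A, hA, hmin⟩ := F.exists_min_image Finset.card hF
    have hA2 : 2 ≤ A.card := hcard A hA
    obtain ⟨a, ha⟩ : A.Nonempty := Finset.card_pos.mp (by omega)
    have herase : (A.erase a).Nonempty := by
      rw [← Finset.card_pos, Finset.card_erase_of_mem ha]; omega
    set S' : Finset α := S \ (A.erase a) with hS'
    have hSS : S' ⊂ S := Finset.sdiff_ssubset ((A.erase_subset a).trans (hsub A hA)) herase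
    -- every other member is a strict superset of A or disjoint from A
    have hkey : ∀ B ∈ F, B ≠ A → (A ⊆ B ∧ A ≠ B) ∨ Disjoint A B := by
      intro B hB hne
      rcases hlam A hA B hB with h | h | h
      · exact Or.inl ⟨h, fun e => hne e.symm⟩
      · exact absurd (Finset.eq_of_subset_of_card_le h (hmin B hB)) hne
      · exact Or.inr h
    set f : Finset α → Finset α := fun B => B \ (A.erase a) with hf
    have hfval : ∀ B ∈ F, B ≠ A → (A ⊆ B → f B = B \ A.erase a) := by intro B _ _ _; rfl
    have hfd : ∀ B, Disjoint A B → f B = B := by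
      intro B hd
      exact Finset.sdiff_eq_self_of_disjoint (hd.symm.mono_right (A.erase_subset a))
    have hamem : ∀ B ∈ F, B ≠ A → (a ∈ f B ↔ A ⊆ B) := by
      intro B hB hne
      rcases hkey B hB hne with ⟨hsub', _⟩ | hd
      · simp [hf, Finset.mem_sdiff, hsub' ha, hsub']
      · rw [hfd B hd]
        constructor
        · intro haB; exact absurd (hd.forall_ne_finset ha haB) (fun h => h rfl)
        · intro h
          have hAe : A = ∅ := disjoint_self.mp (hd.mono_right h)
          rw [hAe] at hA2; simp at hA2
    have hrec : ∀ B ∈ F, B ≠ A → A ⊆ B → f B ∪ A = B := by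
      intro B hB hne hAB
      ext x
      simp only [Finset.mem_union, hf, Finset.mem_sdiff]
      constructor
      · rintro (⟨h, _⟩ | h); exact h; exact hAB h
      · intro hx
        by_cases hxA : x ∈ A
        · exact Or.inr hxA
        · exact Or.inl ⟨hx, fun h => hxA (Finset.erase_subset a A h)⟩
    have hinj : Set.InjOn f (F.erase A) := by
      intro B1 h1 B2 h2 heq
      obtain ⟨hne1, hB1⟩ := Finset.mem_erase.mp h1
      obtain ⟨hne2, hB2⟩ := Finset.mem_erase.mp h2
      by_cases hc : A ⊆ B1
      · have hc2 : A ⊆ B2 := (hamem B2 hB2 hne2).mp (heq ▸ (hamem B1 hB1 hne1).mpr hc)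
        rw [← hrec B1 hB1 hne1 hc, ← hrec B2 hB2 hne2 hc2, heq]
      · have hd1 : Disjoint A B1 := (hkey B1 hB1 hne1).resolve_left (fun h => hc h.1)
        have hc2 : ¬ A ⊆ B2 := fun h =>
          hc ((hamem B1 hB1 hne1).mp (heq ▸ (hamem B2 hB2 hne2).mpr h))
        have hd2 : Disjoint A B2 := (hkey B2 hB2 hne2).resolve_left (fun h => hc2 h.1)
        rw [← hfd B1 hd1, ← hfd B2 hd2, heq]
    set F' : Finset (Finset α) := (F.erase A).image f with hF'
    have hcardF' : F'.card = F.card - 1 := by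
      rw [hF', Finset.card_image_of_injOn hinj, Finset.card_erase_of_mem hA]
    have hIH : F'.card ≤ S'.card - 1 := by
      apply IH S' hSS
      · intro B hB
        obtain ⟨B0, hB0, rfl⟩ := Finset.mem_image.mp hB
        exact Finset.sdiff_subset_sdiff (hsub B0 (Finset.mem_of_mem_erase hB0)) le_rfl
      · intro B hB
        obtain ⟨B0, hB0, rfl⟩ := Finset.mem_image.mp hB
        obtain ⟨hne, hB0F⟩ := Finset.mem_erase.mp hB0
        rcases hkey B0 hB0F hne with ⟨hAB, hne'⟩ | hd
        · have : (A.erase a) ⊆ B0 := (A.erase_subset a).trans hAB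
          rw [Finset.card_sdiff_of_subset this, Finset.card_erase_of_mem ha]
          have h1 : A.card < B0.card :=
            Finset.card_lt_card (lt_of_le_of_ne hAB hne')
          omega
        · rw [hfd B0 hd]; exact hcard B0 hB0F
      · intro B1 h1 B2 h2
        obtain ⟨C1, hC1, rfl⟩ := Finset.mem_image.mp h1
        obtain ⟨C2, hC2, rfl⟩ := Finset.mem_image.mp h2
        rcases hlam C1 (Finset.mem_of_mem_erase hC1) C2 (Finset.mem_of_mem_erase hC2)
          with h | h | h
        · exact Or.inl (Finset.sdiff_subset_sdiff h le_rfl)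
        · exact Or.inr (Or.inl (Finset.sdiff_subset_sdiff h le_rfl))
        · exact Or.inr (Or.inr (h.mono Finset.sdiff_subset Finset.sdiff_subset))
    have hS'card : S'.card = S.card - (A.card - 1) := by
      rw [hS', Finset.card_sdiff_of_subset ((A.erase_subset a).trans (hsub A hA)),
        Finset.card_erase_of_mem ha]
    have hAS : A.card ≤ S.card := Finset.card_le_card (hsub A hA)
    have hFpos : 1 ≤ F.card := Finset.card_pos.mpr hF
    omega

/-- A set of pairwise compatible poles has at most `n - 3` elements: every family of
pairwise compatible splits of `Fin n` has cardinality at most `n - 3`. -/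
theorem card_pairwise_compatible_le (n : ℕ) [NeZero n] (hn : 3 ≤ n)
    (C : Finset (Finset (Fin n)))
    (hsplit : ∀ I ∈ C, IsSplit I)
    (hcompat : ∀ I ∈ C, ∀ J ∈ C, I ≠ J → Compatible I J) :
    C.card ≤ n - 3 := by
  classical
  -- Pass to complements: they form a laminar family inside `univ.erase 0`.
  set S : Finset (Fin n) := (Finset.univ : Finset (Fin n)).erase 0 with hS
  have hScard : S.card = n - 1 := by
    rw [hS, Finset.card_erase_of_mem (Finset.mem_univ _), Finset.card_univ, Fintype.card_fin]
  set D : Finset (Finset (Fin n)) := C.image compl with hD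
  have hDcard : D.card = C.card := Finset.card_image_of_injective C compl_injective
  have hcomplcard : ∀ I ∈ C, (Iᶜ : Finset (Fin n)).card = n - I.card := by
    intro I hI
    rw [Finset.card_compl, Fintype.card_fin]
  have hDsub : ∀ B ∈ D, B ⊆ S := by
    intro B hB
    obtain ⟨I, hI, rfl⟩ := Finset.mem_image.mp hB
    intro x hx
    rw [Finset.mem_compl] at hx
    rw [hS, Finset.mem_erase]
    exact ⟨fun h => hx (h ▸ (hsplit I hI).1), Finset.mem_univ x⟩
  have hDne : S ∉ D := by
    intro hSD
    obtain ⟨I, hI, hIc⟩ := Finset.mem_image.mp hSD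
    have h1 := hcomplcard I hI
    have h2 := (hsplit I hI).2
    rw [hIc, hScard] at h1
    omega
  have hF := laminar_card S (insert S D)
    (by
      intro A hA
      rcases Finset.mem_insert.mp hA with rfl | hA
      · exact subset_rfl
      · exact hDsub A hA)
    (by
      intro A hA
      rcases Finset.mem_insert.mp hA with rfl | hA
      · omega
      · obtain ⟨I, hI, rfl⟩ := Finset.mem_image.mp hA
        have h1 := hcomplcard I hI
        have h2 := (hsplit I hI).2
        omega)
    (by
      intro A hA B hB
      rcases Finset.mem_insert.mp hA with rfl | hA
      · rcases Finset.mem_insert.mp hB with rfl | hB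
        · exact Or.inl subset_rfl
        · exact Or.inr (Or.inl (hDsub B hB))
      rcases Finset.mem_insert.mp hB with rfl | hB
      · exact Or.inl (hDsub A hA)
      obtain ⟨I, hI, rfl⟩ := Finset.mem_image.mp hA
      obtain ⟨J, hJ, rfl⟩ := Finset.mem_image.mp hB
      by_cases hIJ : I = J
      · exact Or.inl (by rw [hIJ])
      rcases hcompat I hI J hJ hIJ with h | h | h
      · exact Or.inr (Or.inl (Finset.compl_subset_compl.mpr h))
      · exact Or.inl (Finset.compl_subset_compl.mpr h)
      · refine Or.inr (Or.inr (Finset.disjoint_iff_inter_eq_empty.mpr ?_))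
        rw [← Finset.compl_union, h, Finset.compl_univ])
  rw [Finset.card_insert_of_notMem hDne, hDcard, hScard] at hF
  omega
end
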